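/- arXiv:2302.12338 — 6 statements merged into one kernel-verified Lean document; each statement's English description precedes it below -/
import Mathlib

section
/- For every n ≥ 2 and every flip distribution D with p_1 > 0, the runtime T of the (1+1)-EA_D on OneMax (the function f = OM) satisfies E[T] ≤ n·(ln n + 1)/p_1, and for every r > 0, Pr[T > n·(ln n + r)/p_1] ≤ e^{−r}. -/
open scoped BigOperators ENNReal Classical

/-- The search space `{0,1}^n`. -/
abbrev Point (n : ℕ) := Fin n → Bool

/-- `OM x` is the number of one-bits of `x`. -/
def OM {n : ℕ} (x : Point n) : ℕ := (Finset.univ.filter fun i => x i = true).card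

/-- Hamming distance between two points. -/
def hamming {n : ℕ} (x y : Point n) : ℕ := (Finset.univ.filter fun i => x i ≠ y i).card

/-- A flip distribution `D = (p_0, …, p_n)` on `{0,…,n}`. -/
structure FlipDist (n : ℕ) where
  p : ℕ → ℝ
  nonneg : ∀ k, 0 ≤ p k
  sum_eq : ∑ k ∈ Finset.range (n+1), p k = 1
  zero_of_gt : ∀ k, n < k → p k = 0

/-- The mean `χ = Σ k·p_k` of a flip distribution. -/
noncomputable def FlipDist.mean {n : ℕ} (D : FlipDist n) : ℝ :=
  ∑ k ∈ Finset.range (n+1), (k : ℝ) * D.p k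

/-- `mutP D x y` is the probability that `mut_D(x) = y`: sample `k ∼ D`, then flip a
uniformly random set of exactly `k` positions.  Exactly one `k`-set maps `x` to `y`,
namely when `k` is the Hamming distance. -/
noncomputable def mutP {n : ℕ} (D : FlipDist n) (x y : Point n) : ℝ :=
  D.p (hamming x y) / (Nat.choose n (hamming x y) : ℝ)

/-- `x` is a global maximum of `f`. -/
def isOpt {n : ℕ} (f : Point n → ℝ) (x : Point n) : Prop := ∀ y, f y ≤ f x

/-- One-step transition probability of the elitist (1+1)-EA_D maximizing `f`. -/
noncomputable def eaStep {n : ℕ} (D : FlipDist n) (f : Point n → ℝ) (x y : Point n) : ℝ :=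
  (if f x ≤ f y then mutP D x y else 0) +
  (if y = x then ∑ z ∈ Finset.univ.filter (fun z => f z < f x), mutP D x z else 0)

/-- Distribution of the current search point `x^(t)` of the (1+1)-EA_D maximizing `f`,
with initial distribution `init`. -/
noncomputable def eaDist {n : ℕ} (D : FlipDist n) (f : Point n → ℝ)
    (init : Point n → ℝ) : ℕ → Point n → ℝ
  | 0 => init
  | t+1 => fun y => ∑ x : Point n, eaDist D f init t x * eaStep D f x y

/-- `survival D f init t = Pr[T > t]`: since the set of global maxima is absorbing for the
elitist chain, this is the probability that `x^(t)` is not a global maximum of `f`. -/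
noncomputable def survival {n : ℕ} (D : FlipDist n) (f : Point n → ℝ)
    (init : Point n → ℝ) (t : ℕ) : ℝ :=
  ∑ x ∈ Finset.univ.filter (fun x => ¬ isOpt f x), eaDist D f init t x

/-- Expected runtime `E[T] = Σ_{t≥0} Pr[T > t]` of the (1+1)-EA_D on `f`. -/
noncomputable def expRuntime {n : ℕ} (D : FlipDist n) (f : Point n → ℝ)
    (init : Point n → ℝ) : ℝ≥0∞ :=
  ∑' t : ℕ, ENNReal.ofReal (survival D f init t)

/-- The uniform initial distribution on `{0,1}^n`. -/
noncomputable def uniformInit (n : ℕ) : Point n → ℝ := fun _ => ((2:ℝ)^n)⁻¹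

/-- The linear function `f(x) = Σ w_i x_i`. -/
noncomputable def linF {n : ℕ} (w : Fin n → ℝ) : Point n → ℝ :=
  fun x => ∑ i : Fin n, w i * (if x i then 1 else 0)

/-! The potential `n - OM x` drops in expectation by a factor `1 - p₁/n` per step: each of
its zero-bits is flipped alone with probability `p₁/n`, and elitism never loses progress.
Starting from `n/2` under the uniform start, Markov's inequality gives
`Pr[T > t] ≤ (1 - p₁/n)^t · n/2 ≤ e^{-p₁ t/n} · n/2`, which yields the tail bound directly
and the expectation bound after summing `min(1, ·)` over `t`. -/

lemma hamming_le {n : ℕ} (x y : Point n) : hamming x y ≤ n := by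
  simpa [hamming] using Finset.card_filter_le (Finset.univ : Finset (Fin n)) (fun i => x i ≠ y i)

lemma OM_le {n : ℕ} (x : Point n) : OM x ≤ n := by
  simpa [OM] using Finset.card_filter_le (Finset.univ : Finset (Fin n)) (fun i => x i = true)

/-- `y` is determined by the set of positions where it differs from `x`. -/
lemma card_filter_hamming_eq {n : ℕ} (x : Point n) (k : ℕ) :
    (Finset.univ.filter fun y : Point n => hamming x y = k).card = n.choose k := by
  have hchoose : n.choose k = (Finset.univ.powersetCard k : Finset (Finset (Fin n))).card := by
    simp
  rw [hchoose]
  refine Finset.card_nbij' (fun y => Finset.univ.filter fun i => x i ≠ y i)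
    (fun s i => if i ∈ s then !x i else x i) ?_ ?_ ?_ ?_
  · intro y hy
    simpa [hamming] using hy
  · intro s hs
    rw [Finset.mem_coe, Finset.mem_powersetCard_univ] at hs
    simp only [Finset.coe_filter, Finset.mem_univ, true_and, Set.mem_ofPred_eq, hamming, ← hs]
    congr 1
    ext i
    by_cases hi : i ∈ s <;> simp [hi]
  · intro y _
    funext i
    by_cases h : x i = y i <;> cases hx : x i <;> cases hy : y i <;> simp_all
  · intro s _
    ext i
    by_cases hi : i ∈ s <;> simp [hi]

lemma mutP_nonneg {n : ℕ} (D : FlipDist n) (x y : Point n) : 0 ≤ mutP D x y :=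
  div_nonneg (D.nonneg _) (Nat.cast_nonneg _)

lemma sum_mutP {n : ℕ} (D : FlipDist n) (x : Point n) : ∑ y : Point n, mutP D x y = 1 := by
  rw [← D.sum_eq, ← Finset.sum_fiberwise_of_maps_to (g := hamming x)
    fun y _ => Finset.mem_range.mpr (Nat.lt_succ_of_le (hamming_le x y))]
  refine Finset.sum_congr rfl fun k hk => ?_
  have hchoose : (0 : ℝ) < n.choose k :=
    Nat.cast_pos.mpr (Nat.choose_pos (Nat.lt_succ_iff.mp (Finset.mem_range.mp hk)))
  rw [Finset.sum_congr rfl fun y hy => by rw [mutP, (Finset.mem_filter.mp hy).2],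
    Finset.sum_const, card_filter_hamming_eq, nsmul_eq_mul]
  field_simp

lemma FlipDist.p_le_one {n : ℕ} (D : FlipDist n) (k : ℕ) : D.p k ≤ 1 := by
  rcases le_or_gt k n with hk | hk
  · rw [← D.sum_eq]
    exact Finset.single_le_sum (fun j _ => D.nonneg j)
      (Finset.mem_range.mpr (Nat.lt_succ_of_le hk))
  · rw [D.zero_of_gt k hk]
    exact zero_le_one

section Elitist

variable {n : ℕ} (D : FlipDist n) (f : Point n → ℝ)

lemma eaStep_nonneg (x y : Point n) : 0 ≤ eaStep D f x y := by
  unfold eaStep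
  refine add_nonneg ?_ ?_ <;> split_ifs
  exacts [mutP_nonneg D x y, le_rfl, Finset.sum_nonneg fun z _ => mutP_nonneg D x z, le_rfl]

lemma sum_eaStep (x : Point n) : ∑ y : Point n, eaStep D f x y = 1 := by
  unfold eaStep
  rw [Finset.sum_add_distrib, Finset.sum_ite_eq' Finset.univ x, if_pos (Finset.mem_univ x),
    ← Finset.sum_filter]
  simp_rw [← not_le]
  rw [Finset.sum_filter_add_sum_filter_not, sum_mutP]

lemma eaStep_of_lt {x y : Point n} (h : f x < f y) : eaStep D f x y = mutP D x y := by
  rw [eaStep, if_pos h.le, if_neg (by rintro rfl; exact h.false), add_zero]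

lemma eaStep_mul_sub_nonneg (x y : Point n) : 0 ≤ eaStep D f x y * (f y - f x) := by
  by_cases hxy : y = x
  · simp [hxy]
  by_cases hle : f x ≤ f y
  · exact mul_nonneg (eaStep_nonneg D f x y) (sub_nonneg.mpr hle)
  · simp [eaStep, hle, hxy]

lemma sum_mutP_mul_sub_le_sum_eaStep_mul_sub (x : Point n) (S : Finset (Point n))
    (hS : ∀ y ∈ S, f x < f y) :
    ∑ y ∈ S, mutP D x y * (f y - f x) ≤ ∑ y : Point n, eaStep D f x y * (f y - f x) := by
  calc ∑ y ∈ S, mutP D x y * (f y - f x) = ∑ y ∈ S, eaStep D f x y * (f y - f x) :=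
        Finset.sum_congr rfl fun y hy => by rw [eaStep_of_lt D f (hS y hy)]
    _ ≤ _ := Finset.sum_le_sum_of_subset_of_nonneg (Finset.subset_univ S)
        fun y _ _ => eaStep_mul_sub_nonneg D f x y

variable (init : Point n → ℝ)

lemma eaDist_nonneg (hinit : ∀ x, 0 ≤ init x) (t : ℕ) (x : Point n) :
    0 ≤ eaDist D f init t x := by
  induction t generalizing x with
  | zero => exact hinit x
  | succ t ih => exact Finset.sum_nonneg fun z _ => mul_nonneg (ih z) (eaStep_nonneg D f z x)

lemma sum_eaDist_mul_le_pow (hinit : ∀ x, 0 ≤ init x) (g : Point n → ℝ) {q : ℝ}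
    (hq : 0 ≤ q) (hdrift : ∀ x, ∑ y : Point n, eaStep D f x y * g y ≤ q * g x) (t : ℕ) :
    ∑ x : Point n, eaDist D f init t x * g x ≤ q ^ t * ∑ x : Point n, init x * g x := by
  induction t with
  | zero => simp [eaDist]
  | succ t ih =>
    calc ∑ y : Point n, eaDist D f init (t + 1) y * g y
        = ∑ x : Point n, eaDist D f init t x * ∑ y : Point n, eaStep D f x y * g y := by
          simp only [eaDist, Finset.sum_mul, Finset.mul_sum, mul_assoc]
          exact Finset.sum_comm
      _ ≤ ∑ x : Point n, eaDist D f init t x * (q * g x) :=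
          Finset.sum_le_sum fun x _ =>
            mul_le_mul_of_nonneg_left (hdrift x) (eaDist_nonneg D f init hinit t x)
      _ = q * ∑ x : Point n, eaDist D f init t x * g x := by
          rw [Finset.mul_sum]
          exact Finset.sum_congr rfl fun x _ => by ring
      _ ≤ q ^ (t + 1) * ∑ x : Point n, init x * g x := by
          rw [pow_succ', mul_assoc]
          exact mul_le_mul_of_nonneg_left ih hq

lemma survival_nonneg (hinit : ∀ x, 0 ≤ init x) (t : ℕ) : 0 ≤ survival D f init t :=
  Finset.sum_nonneg fun x _ => eaDist_nonneg D f init hinit t x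

/-- Markov's inequality for the current search point. -/
lemma survival_le_sum_eaDist_mul (hinit : ∀ x, 0 ≤ init x) (g : Point n → ℝ)
    (hg : ∀ x, 0 ≤ g x) (hg_one : ∀ x, ¬ isOpt f x → 1 ≤ g x) (t : ℕ) :
    survival D f init t ≤ ∑ x : Point n, eaDist D f init t x * g x :=
  calc survival D f init t
      ≤ ∑ x ∈ Finset.univ.filter (fun x => ¬ isOpt f x), eaDist D f init t x * g x :=
        Finset.sum_le_sum fun x hx => le_mul_of_one_le_right (eaDist_nonneg D f init hinit t x)
          (hg_one x (Finset.mem_filter.mp hx).2)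
    _ ≤ ∑ x : Point n, eaDist D f init t x * g x :=
        Finset.sum_le_sum_of_subset_of_nonneg (Finset.filter_subset _ _)
          fun x _ _ => mul_nonneg (eaDist_nonneg D f init hinit t x) (hg x)

lemma survival_le_sum_init (hinit : ∀ x, 0 ≤ init x) (t : ℕ) :
    survival D f init t ≤ ∑ x : Point n, init x := by
  simpa using (survival_le_sum_eaDist_mul D f init hinit (fun _ => 1) (fun _ => zero_le_one)
    (fun _ _ => le_rfl) t).trans
    (sum_eaDist_mul_le_pow D f init hinit (fun _ => 1) zero_le_one
      (fun x => by simp [sum_eaStep]) t)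

end Elitist

section OneMax

variable {n : ℕ}

lemma OM_add_card_filter_eq_false (x : Point n) :
    OM x + (Finset.univ.filter fun i => x i = false).card = n := by
  simpa [OM] using Finset.card_filter_add_card_filter_not (s := Finset.univ) (fun i => x i = true)

lemma OM_not_add_OM (x : Point n) : OM (fun i => !x i) + OM x = n := by
  simpa [OM, add_comm] using OM_add_card_filter_eq_false x

lemma sub_OM_nonneg (x : Point n) : 0 ≤ (n : ℝ) - OM x :=
  sub_nonneg.mpr (Nat.cast_le.mpr (OM_le x))

lemma one_le_sub_OM {x : Point n} (hx : ¬ isOpt (fun z => (OM z : ℝ)) x) :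
    1 ≤ (n : ℝ) - OM x := by
  have hlt : OM x < n := by
    refine (OM_le x).lt_of_ne fun h => hx fun y => ?_
    simpa [h] using OM_le y
  rw [le_sub_iff_add_le', ← Nat.cast_add_one, Nat.cast_le]
  exact hlt

lemma OM_update_true {x : Point n} {i : Fin n} (hi : x i = false) :
    OM (Function.update x i true) = OM x + 1 := by
  have : (Finset.univ.filter fun j => Function.update x i true j = true)
      = insert i (Finset.univ.filter fun j => x j = true) := by
    ext j
    by_cases hj : j = i <;> simp [Function.update, hj, hi]
  rw [OM, this, Finset.card_insert_of_notMem (by simp [hi]), OM]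

lemma hamming_update {x : Point n} {i : Fin n} {b : Bool} (hi : x i ≠ b) :
    hamming x (Function.update x i b) = 1 := by
  have : (Finset.univ.filter fun j => x j ≠ Function.update x i b j) = {i} := by
    ext j
    by_cases hj : j = i <;> simp [Function.update, hj, hi]
  rw [hamming, this, Finset.card_singleton]

lemma mutP_update (D : FlipDist n) {x : Point n} {i : Fin n} {b : Bool} (hi : x i ≠ b) :
    mutP D x (Function.update x i b) = D.p 1 / n := by
  rw [mutP, hamming_update hi, Nat.choose_one_right]

/-- Each of the `n - OM x` zero-bits is flipped alone, and accepted, with probability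
`p₁ / n`. -/
lemma oneMax_drift (D : FlipDist n) (x : Point n) :
    ∑ y : Point n, eaStep D (fun z => (OM z : ℝ)) x y * ((n : ℝ) - OM y)
      ≤ (1 - D.p 1 / n) * ((n : ℝ) - OM x) := by
  set f : Point n → ℝ := fun z => (OM z : ℝ)
  set Z := Finset.univ.filter fun i => x i = false
  set u : Fin n → Point n := fun i => Function.update x i true
  have hZ : (Z.card : ℝ) = n - OM x := by
    rw [eq_sub_iff_add_eq', ← Nat.cast_add, OM_add_card_filter_eq_false]
  have hu : Set.InjOn u Z := by
    intro i hi j _ hij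
    by_contra hne
    have := congrFun hij i
    simp_all [u, Z]
  have hgain : ∀ i ∈ Z, f (u i) - f x = 1 := fun i hi => by
    simp [f, u, OM_update_true (Finset.mem_filter.mp hi).2]
  have hprogress : D.p 1 / n * ((n : ℝ) - OM x)
      ≤ ∑ y : Point n, eaStep D f x y * (f y - f x) :=
    calc D.p 1 / n * ((n : ℝ) - OM x)
        = ∑ y ∈ Z.image u, mutP D x y * (f y - f x) := by
          rw [Finset.sum_image hu, ← hZ, Finset.card_eq_sum_ones, Nat.cast_sum, Finset.mul_sum]
          refine Finset.sum_congr rfl fun i hi => ?_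
          rw [hgain i hi, mutP_update D (by simp [(Finset.mem_filter.mp hi).2])]
          simp
      _ ≤ ∑ y : Point n, eaStep D f x y * (f y - f x) := by
          refine sum_mutP_mul_sub_le_sum_eaStep_mul_sub D f x _ fun y hy => ?_
          obtain ⟨i, hi, rfl⟩ := Finset.mem_image.mp hy
          linarith [hgain i hi]
  have hsplit : ∑ y : Point n, eaStep D f x y * ((n : ℝ) - OM y)
      = ((n : ℝ) - OM x) - ∑ y : Point n, eaStep D f x y * (f y - f x) := by
    rw [eq_sub_iff_add_eq, ← Finset.sum_add_distrib]
    calc _ = ∑ y : Point n, eaStep D f x y * ((n : ℝ) - OM x) :=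
          Finset.sum_congr rfl fun y _ => by simp only [f]; ring
      _ = _ := by rw [← Finset.sum_mul, sum_eaStep, one_mul]
  rw [hsplit]
  linarith


lemma uniformInit_nonneg (x : Point n) : 0 ≤ uniformInit n x := by
  unfold uniformInit
  positivity

lemma sum_uniformInit : ∑ x : Point n, uniformInit n x = 1 := by
  simp [uniformInit]

/-- Complementing all bits is a bijection exchanging `OM x` and `n - OM x`. -/
lemma sum_uniformInit_mul_sub_OM :
    ∑ x : Point n, uniformInit n x * ((n : ℝ) - OM x) = n / 2 := by
  have hnot : Function.Involutive (fun (x : Point n) i => !x i) := fun x => by simp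
  have hsymm : ∑ x : Point n, ((n : ℝ) - OM x) = ∑ x : Point n, (OM x : ℝ) := by
    rw [← Equiv.sum_comp hnot.toPerm fun x => (OM x : ℝ)]
    refine Finset.sum_congr rfl fun x _ => ?_
    change (n : ℝ) - OM x = OM (fun i => !x i)
    rw [eq_comm, eq_sub_iff_add_eq, ← Nat.cast_add, OM_not_add_OM]
  have htotal :
      ∑ x : Point n, ((n : ℝ) - OM x) + ∑ x : Point n, (OM x : ℝ) = n * 2 ^ n := by
    rw [← Finset.sum_add_distrib]
    simp [mul_comm]
  simp only [uniformInit, ← Finset.mul_sum]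
  field_simp
  linarith


end OneMax

section Geometric

variable {δ m : ℝ}

lemma one_sub_pow_le_exp_neg_mul (hδ : δ ≤ 1) (t : ℕ) :
    (1 - δ) ^ t ≤ Real.exp (-(δ * t)) :=
  calc (1 - δ) ^ t ≤ Real.exp (-δ) ^ t :=
        pow_le_pow_left₀ (by linarith) (Real.one_sub_le_exp_neg δ) t
    _ = Real.exp (-(δ * t)) := by rw [← Real.exp_nat_mul]; ring_nf

lemma le_exp_neg_of_le_one_sub_pow (hδ0 : 0 < δ) (hδ : δ ≤ 1 / 2) (hm : 0 < m)
    {s : ℕ → ℝ} (hs : ∀ t, s t ≤ (1 - δ) ^ t * (m / 2)) (r : ℝ) :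
    s ⌊(Real.log m + r) / δ⌋₊ ≤ Real.exp (-r) := by
  set t := ⌊(Real.log m + r) / δ⌋₊
  have ht : Real.log m + r - δ ≤ δ * t := by
    have := Nat.lt_floor_add_one ((Real.log m + r) / δ)
    rw [div_lt_iff₀ hδ0] at this
    linarith
  have hexp : Real.exp δ ≤ 2 := by
    rw [← Real.exp_log two_pos]
    exact Real.exp_le_exp.mpr (by linarith [Real.log_two_gt_d9])
  calc s t ≤ (1 - δ) ^ t * (m / 2) := hs t
    _ ≤ Real.exp (-(δ * t)) * (m / 2) := by
        gcongr
        exact one_sub_pow_le_exp_neg_mul (by linarith) t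
    _ ≤ Real.exp (δ - r - Real.log m) * (m / 2) := by gcongr; linarith
    _ = Real.exp δ / 2 * Real.exp (-r) := by
        rw [Real.exp_sub, Real.exp_sub, Real.exp_log hm, Real.exp_neg]
        field_simp
    _ ≤ Real.exp (-r) := mul_le_of_le_one_left (Real.exp_pos _).le (by linarith)

/-- Bound `s t` by `1` for the first `⌈log m / δ⌉` steps and by the geometric tail after. -/
lemma tsum_ofReal_le_of_le_one_sub_pow (hδ0 : 0 < δ) (hδ : δ ≤ 1 / 2) (hm : 1 ≤ m)
    {s : ℕ → ℝ} (hs0 : ∀ t, 0 ≤ s t) (hs1 : ∀ t, s t ≤ 1)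
    (hs : ∀ t, s t ≤ (1 - δ) ^ t * (m / 2)) :
    ∑' t, ENNReal.ofReal (s t) ≤ ENNReal.ofReal ((Real.log m + 1) / δ) := by
  have hq0 : 0 ≤ 1 - δ := by linarith
  have hq1 : 1 - δ < 1 := by linarith
  have hgeom : Summable fun t : ℕ => (1 - δ) ^ t := summable_geometric_of_lt_one hq0 hq1
  have hsum : Summable s := Summable.of_nonneg_of_le hs0 hs (hgeom.mul_right _)
  rw [← ENNReal.ofReal_tsum_of_nonneg hs0 hsum]
  refine ENNReal.ofReal_le_ofReal ?_
  set t₀ := ⌈Real.log m / δ⌉₊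
  have ht₀ : (t₀ : ℝ) < Real.log m / δ + 1 :=
    Nat.ceil_lt_add_one (div_nonneg (Real.log_nonneg hm) hδ0.le)
  have hlog : Real.log m ≤ δ * t₀ := by
    have := Nat.le_ceil (Real.log m / δ)
    rwa [div_le_iff₀ hδ0, mul_comm] at this
  have hpow : (1 - δ) ^ t₀ * m ≤ 1 :=
    calc (1 - δ) ^ t₀ * m ≤ Real.exp (-Real.log m) * m := by
          gcongr
          exact (one_sub_pow_le_exp_neg_mul (by linarith) t₀).trans
            (Real.exp_le_exp.mpr (by linarith))
      _ = 1 := by rw [Real.exp_neg, Real.exp_log (by linarith)]; field_simp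
  have hhead : ∑ t ∈ Finset.range t₀, s t ≤ t₀ := by
    simpa using Finset.sum_le_sum fun t (_ : t ∈ Finset.range t₀) => hs1 t
  have htail : ∑' i, s (i + t₀) ≤ 1 / (2 * δ) :=
    calc ∑' i, s (i + t₀) ≤ ∑' i, (1 - δ) ^ t₀ * (m / 2) * (1 - δ) ^ i :=
          ((summable_nat_add_iff t₀).mpr hsum).tsum_le_tsum
            (fun i => (hs _).trans_eq (by ring)) (hgeom.mul_left _)
      _ = (1 - δ) ^ t₀ * m / (2 * δ) := by
          rw [tsum_mul_left, tsum_geometric_of_lt_one hq0 hq1, sub_sub_cancel]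
          field_simp
      _ ≤ 1 / (2 * δ) := by gcongr
  have hδ_inv : 1 ≤ 1 / (2 * δ) := by rw [le_div_iff₀ (by linarith)]; linarith
  have hsplit : (Real.log m + 1) / δ = Real.log m / δ + 1 / (2 * δ) + 1 / (2 * δ) := by
    field_simp
    ring
  rw [← hsum.sum_add_tsum_nat_add t₀]
  linarith

end Geometric

/-- For every `n ≥ 2` and every flip distribution with `p₁ > 0`, the
runtime `T` of the (1+1)-EA_D on OneMax satisfies `E[T] ≤ n·(ln n + 1)/p₁`, and for every
`r > 0`, `Pr[T > n·(ln n + r)/p₁] ≤ e^{−r}`. -/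
theorem stmt1 (n : ℕ) (hn : 2 ≤ n) (D : FlipDist n) (hp1 : 0 < D.p 1) :
    expRuntime D (fun x => (OM x : ℝ)) (uniformInit n)
        ≤ ENNReal.ofReal ((n : ℝ) * (Real.log n + 1) / D.p 1) ∧
    ∀ r : ℝ, 0 < r →
      survival D (fun x => (OM x : ℝ)) (uniformInit n)
          ⌊(n : ℝ) * (Real.log n + r) / D.p 1⌋₊
        ≤ Real.exp (-r) := by
  have hn2 : (2 : ℝ) ≤ n := by exact_mod_cast hn
  have hδ0 : 0 < D.p 1 / n := by positivity
  have hδ : D.p 1 / n ≤ 1 / 2 := by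
    rw [div_le_iff₀ (by positivity)]
    linarith [D.p_le_one 1]
  have hsurv (t : ℕ) : survival D (fun x => (OM x : ℝ)) (uniformInit n) t
      ≤ (1 - D.p 1 / n) ^ t * (n / 2) :=
    calc _ ≤ ∑ x, eaDist D (fun x => (OM x : ℝ)) (uniformInit n) t x * ((n : ℝ) - OM x) :=
          survival_le_sum_eaDist_mul D _ _ uniformInit_nonneg _ sub_OM_nonneg
            (fun _ => one_le_sub_OM) t
      _ ≤ (1 - D.p 1 / n) ^ t * ∑ x, uniformInit n x * ((n : ℝ) - OM x) :=
          sum_eaDist_mul_le_pow D _ _ uniformInit_nonneg _ (by linarith) (oneMax_drift D) t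
      _ = (1 - D.p 1 / n) ^ t * (n / 2) := by rw [sum_uniformInit_mul_sub_OM]
  have hdiv (a : ℝ) : a / (D.p 1 / n) = n * a / D.p 1 := by field_simp
  refine ⟨?_, fun r _ => ?_⟩
  · rw [← hdiv]
    exact tsum_ofReal_le_of_le_one_sub_pow hδ0 hδ (by linarith)
      (survival_nonneg D _ _ uniformInit_nonneg)
      (fun t => (survival_le_sum_init D _ _ uniformInit_nonneg t).trans_eq sum_uniformInit)
      hsurv
  · rw [← hdiv]
    exact le_exp_neg_of_le_one_sub_pow hδ0 hδ (by linarith) hsurv r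
end

section
/- For every integer n ≥ 1, every flip distribution D on {0,1,…,n}, and every x ∈ {0,1}^n with d(x) = d, the expected decrease of the best-so-far potential in one mutation step from parent x equals h̃(d); that is, E[ d − min(d, d(mut_D(x))) ] = Σ_{r=1}^{n−1} (p_r + p_{n−r})·B(n,d,r) = h̃(d). -/
open scoped BigOperators ENNReal Classical

/-- `dOf x = min(OM(x), n − OM(x))`. -/
def dOf {n : ℕ} (x : Point n) : ℕ := min (OM x) (n - OM x)

/-- `B(n,d,r) = Σ_{i=max(⌈r/2⌉, r+d−n)}^{min(d,r)} (2i−r)·C(d,i)·C(n−d,r−i)/C(n,r)`. -/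
noncomputable def B (n d r : ℕ) : ℝ :=
  ∑ i ∈ Finset.Icc (max ((r+1)/2) (r + d - n)) (min d r),
    ((2*i - r : ℕ) : ℝ) * (Nat.choose d i : ℝ) * (Nat.choose (n-d) (r-i) : ℝ) /
      (Nat.choose n r : ℝ)

/-- `h̃(d) = Σ_{r=1}^{n−1} (p_r + p_{n−r})·B(n,d,r)`. -/
noncomputable def htilde {n : ℕ} (D : FlipDist n) (d : ℕ) : ℝ :=
  ∑ r ∈ Finset.Icc 1 (n-1), (D.p r + D.p (n-r)) * B n d r

-- ===== auxiliary lemmas =====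

lemma card_bool_fun_ones (β : Type*) [Fintype β] [DecidableEq β] (a : ℕ) :
    (Finset.univ.filter fun u : β → Bool =>
      (Finset.univ.filter fun i => u i = true).card = a).card
      = Nat.choose (Fintype.card β) a := by
  rw [show (Fintype.card β).choose a = ((Finset.univ : Finset β).powersetCard a).card by
    rw [Finset.card_powersetCard, Finset.card_univ]]
  apply Finset.card_bij (fun u _ => Finset.univ.filter fun i => u i = true)
  · intro u hu
    simp only [Finset.mem_filter, Finset.mem_univ, true_and] at hu
    simp [Finset.mem_powersetCard, hu]
  · intro u hu v hv h
    funext i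
    have := Finset.ext_iff.1 h i
    simp at this
    cases hui : u i <;> cases hvi : v i <;> simp [hui, hvi] at this ⊢
  · intro s hs
    refine ⟨fun i => i ∈ s, ?_, ?_⟩
    · simp only [Finset.mem_filter, Finset.mem_univ, true_and]
      rw [Finset.mem_powersetCard] at hs
      rw [← hs.2]; congr 1; ext i; simp
    · ext i; simp

lemma sum_bool_fun (β : Type*) [Fintype β] [DecidableEq β] (f : ℕ → ℝ) :
    ∑ u : β → Bool, f (Finset.univ.filter fun i => u i = true).card
      = ∑ a ∈ Finset.range (Fintype.card β + 1),
          (Nat.choose (Fintype.card β) a : ℝ) * f a := by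
  have hmap : ∀ u ∈ (Finset.univ : Finset (β → Bool)),
      (Finset.univ.filter fun i => u i = true).card ∈ Finset.range (Fintype.card β + 1) := by
    intro u _
    simp only [Finset.mem_range, Nat.lt_succ_iff, ← Finset.card_univ]
    exact Finset.card_filter_le _ _
  rw [← Finset.sum_fiberwise_of_maps_to hmap]
  refine Finset.sum_congr rfl fun a _ => ?_
  have : ∀ u ∈ Finset.univ.filter (fun u : β → Bool =>
      (Finset.univ.filter fun i => u i = true).card = a),
      f (Finset.univ.filter fun i => u i = true).card = f a := by
    intro u hu
    simp only [Finset.mem_filter] at hu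
    rw [hu.2]
  rw [Finset.sum_congr rfl this, Finset.sum_const, ← card_bool_fun_ones, nsmul_eq_mul]

lemma card_sub {n : ℕ} (q : Fin n → Prop) [DecidablePred q] (w : Fin n → Bool) :
    (Finset.univ.filter fun j : {i : Fin n // q i} => w j.val = true).card
      = (Finset.univ.filter fun i : Fin n => q i ∧ w i = true).card := by
  apply Finset.card_bij (fun j _ => j.val)
  · intro j hj
    simp only [Finset.mem_filter, Finset.mem_univ, true_and] at hj ⊢
    exact ⟨j.property, hj⟩
  · intro j _ k _ h; exact Subtype.ext h
  · intro i hi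
    simp only [Finset.mem_filter, Finset.mem_univ, true_and] at hi
    exact ⟨⟨i, hi.1⟩, by simp [hi.2], rfl⟩

lemma sum_point_split (n m : ℕ) (x : Fin n → Bool)
    (hm : (Finset.univ.filter fun i => x i = true).card = m) (g : ℕ → ℕ → ℝ) :
    ∑ z : Fin n → Bool,
      g (Finset.univ.filter fun i => x i = true ∧ z i = true).card
        (Finset.univ.filter fun i => ¬ (x i = true) ∧ z i = true).card
      = ∑ a ∈ Finset.range (m+1), ∑ b ∈ Finset.range (n-m+1),
          (Nat.choose m a : ℝ) * (Nat.choose (n-m) b : ℝ) * g a b := by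
  classical
  have hc1 : Fintype.card {i : Fin n // x i = true} = m := by
    rw [Fintype.card_subtype]; exact hm
  have hc2 : Fintype.card {i : Fin n // ¬ (x i = true)} = n - m := by
    rw [Fintype.card_subtype]
    have h2 := Finset.card_filter_add_card_filter_not (s := (Finset.univ : Finset (Fin n)))
      (p := fun i : Fin n => x i = true)
    simp only [Finset.card_univ, Fintype.card_fin, hm] at h2
    omega
  let e := Equiv.piEquivPiSubtypeProd (fun i : Fin n => x i = true) (fun _ => Bool)
  rw [Fintype.sum_equiv e _
    (fun uv => g (Finset.univ.filter fun j => uv.1 j = true).card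
      (Finset.univ.filter fun j => uv.2 j = true).card) ?_]
  · rw [Fintype.sum_prod_type]
    have step1 : ∀ u : {i : Fin n // x i = true} → Bool,
        ∑ v : {i : Fin n // ¬ (x i = true)} → Bool,
          g (Finset.univ.filter fun j => u j = true).card
            (Finset.univ.filter fun j => v j = true).card
        = ∑ b ∈ Finset.range (n-m+1), (Nat.choose (n-m) b : ℝ) *
            g (Finset.univ.filter fun j => u j = true).card b := by
      intro u
      rw [sum_bool_fun _ (fun b => g (Finset.univ.filter fun j => u j = true).card b), hc2]
    rw [Finset.sum_congr rfl fun u _ => step1 u]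
    rw [sum_bool_fun {i : Fin n // x i = true}
      (fun aa => ∑ b ∈ Finset.range (n - m + 1), (Nat.choose (n-m) b : ℝ) * g aa b), hc1]
    refine Finset.sum_congr rfl fun a _ => ?_
    rw [Finset.mul_sum]
    refine Finset.sum_congr rfl fun b _ => ?_
    ring
  · intro z
    congr 1
    · exact (card_sub (fun i => x i = true) z).symm
    · exact (card_sub (fun i => ¬ (x i = true)) z).symm

def B' (n d r : ℕ) : ℕ :=
  ∑ i ∈ Finset.range (r+1), (2*i - r) * Nat.choose d i * Nat.choose (n-d) (r-i)

lemma B'_zero (n d : ℕ) : B' n d 0 = 0 := by simp [B']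

lemma B'_n (n d : ℕ) (hd : 2*d ≤ n) : B' n d n = 0 := by
  refine Finset.sum_eq_zero fun i hi => ?_
  rcases le_or_gt i d with h | h
  · have : 2*i - n = 0 := by omega
    simp [this]
  · simp [Nat.choose_eq_zero_of_lt h]

lemma B_eq_B' (n d r : ℕ) (hdn : d ≤ n) : B n d r = (B' n d r : ℝ) / (Nat.choose n r : ℝ) := by
  rw [B, B', ← Finset.sum_div]
  congr 1
  have hsub : Finset.Icc (max ((r+1)/2) (r + d - n)) (min d r) ⊆ Finset.range (r+1) := by
    intro i hi
    simp only [Finset.mem_Icc] at hi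
    simp only [Finset.mem_range]
    omega
  have hzero : ∀ i ∈ Finset.range (r+1),
      i ∉ Finset.Icc (max ((r+1)/2) (r + d - n)) (min d r) →
      ((2*i - r : ℕ) : ℝ) * (Nat.choose d i : ℝ) * (Nat.choose (n-d) (r-i) : ℝ) = 0 := by
    intro i hi hni
    simp only [Finset.mem_range] at hi
    rcases not_and_or.mp ((not_congr Finset.mem_Icc).mp hni) with h' | h'
    · rw [not_le] at h'
      rcases lt_max_iff.mp h' with h'' | h''
      · have hz : 2*i - r = 0 := by omega
        simp [hz]
      · have h4 : n - d < r - i := by omega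
        simp [Nat.choose_eq_zero_of_lt h4]
    · rw [not_le] at h'
      have hd : d < i := by omega
      simp [Nat.choose_eq_zero_of_lt hd]
  rw [Finset.sum_subset hsub hzero, Nat.cast_sum]
  refine Finset.sum_congr rfl fun i _ => ?_
  push_cast; ring

lemma R1 (n m c r : ℕ) (hmc : m + c = n) :
    ∑ q ∈ (Finset.range (m+1) ×ˢ Finset.range (c+1)).filter (fun q => q.1 + q.2 = r),
      (2*q.1 - r) * Nat.choose m q.1 * Nat.choose c q.2
    = B' n m r := by
  have hnm : n - m = c := by omega
  rw [B', hnm]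
  rw [← Finset.sum_subset (s₁ := (Finset.range (r+1)).filter (fun i => i ≤ m ∧ r - i ≤ c))
    (Finset.filter_subset _ _) (fun i hi hni => ?_)]
  · apply Finset.sum_nbij' (fun q => q.1) (fun i => (i, r - i))
    · intro q hq
      simp only [Finset.mem_filter, Finset.mem_product, Finset.mem_range] at hq ⊢
      omega
    · intro i hi
      simp only [Finset.mem_filter, Finset.mem_product, Finset.mem_range] at hi ⊢
      omega
    · intro q hq
      simp only [Finset.mem_filter, Finset.mem_product, Finset.mem_range] at hq
      exact Prod.ext rfl (by omega)
    · intro i hi; rfl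
    · intro q hq
      simp only [Finset.mem_filter, Finset.mem_product, Finset.mem_range] at hq
      have : q.2 = r - q.1 := by omega
      rw [this]
  · simp only [Finset.mem_filter, Finset.mem_range, not_and] at hni
    have hir := Finset.mem_range.mp hi
    rcases le_or_gt i m with h1 | h1
    · have h2 : c < r - i := by
        have := hni hir h1
        omega
      simp [Nat.choose_eq_zero_of_lt h2]
    · simp [Nat.choose_eq_zero_of_lt h1]

lemma R2 (n m c r : ℕ) (hmc : m + c = n) (hr : r ≤ n) :
    ∑ q ∈ (Finset.range (m+1) ×ˢ Finset.range (c+1)).filter (fun q => q.1 + q.2 = r),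
      (2*(m - q.1) - (n-r)) * Nat.choose m q.1 * Nat.choose c q.2
    = B' n m (n-r) := by
  have hnm : n - m = c := by omega
  rw [B', hnm]
  rw [← Finset.sum_subset (s₁ := (Finset.range (n-r+1)).filter (fun j => j ≤ m ∧ m - r ≤ j))
    (Finset.filter_subset _ _) (fun j hj hnj => ?_)]
  · apply Finset.sum_nbij' (fun q => m - q.1) (fun j => (m - j, r - (m - j)))
    · intro q hq
      simp only [Finset.mem_filter, Finset.mem_product, Finset.mem_range] at hq ⊢
      omega
    · intro j hj
      simp only [Finset.mem_filter, Finset.mem_product, Finset.mem_range] at hj ⊢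
      omega
    · intro q hq
      simp only [Finset.mem_filter, Finset.mem_product, Finset.mem_range] at hq
      exact Prod.ext (by omega) (by omega)
    · intro j hj
      simp only [Finset.mem_filter, Finset.mem_range] at hj
      omega
    · intro q hq
      simp only [Finset.mem_filter, Finset.mem_product, Finset.mem_range] at hq
      have e1 : Nat.choose m (m - q.1) = Nat.choose m q.1 := Nat.choose_symm (by omega)
      have e2 : (n - r) - (m - q.1) = c - q.2 := by omega
      have e3 : Nat.choose c (c - q.2) = Nat.choose c q.2 := Nat.choose_symm (by omega)
      rw [e1, e2, e3]
  · simp only [Finset.mem_filter, Finset.mem_range, not_and] at hnj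
    have hjr := Finset.mem_range.mp hj
    rcases le_or_gt j m with h1 | h1
    · have h2 : c < (n - r) - j := by
        have := hnj hjr h1
        omega
      simp [Nat.choose_eq_zero_of_lt h2]
    · simp [Nat.choose_eq_zero_of_lt h1]

lemma Knat (n m c r : ℕ) (hmc : m + c = n) (hlec : m ≤ c) (hr : r ≤ n) :
    ∑ q ∈ (Finset.range (m+1) ×ˢ Finset.range (c+1)).filter (fun q => q.1 + q.2 = r),
      Nat.choose m q.1 * Nat.choose c q.2 *
        (m - min m (min ((m - q.1) + q.2) (n - ((m - q.1) + q.2))))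
    = B' n m r + B' n m (n-r) := by
  rw [← R1 n m c r hmc, ← R2 n m c r hmc hr, ← Finset.sum_add_distrib]
  refine Finset.sum_congr rfl fun q hq => ?_
  simp only [Finset.mem_filter, Finset.mem_product, Finset.mem_range] at hq
  have hdec : (m - min m (min ((m - q.1) + q.2) (n - ((m - q.1) + q.2))))
      = (2*q.1 - r) + (2*(m - q.1) - (n-r)) := by omega
  rw [hdec]; ring

lemma MAIN2 (n m c : ℕ) (hmc : m + c = n) (hlec : m ≤ c) (p : ℕ → ℝ) :
    ∑ a ∈ Finset.range (m+1), ∑ b ∈ Finset.range (c+1), (Nat.choose m a : ℝ) * (Nat.choose c b : ℝ) *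
      (p (a+b) / (Nat.choose n (a+b) : ℝ) * ((m - min m (min ((m-a)+b) (n-((m-a)+b))) : ℕ) : ℝ))
    = ∑ r ∈ Finset.range (n+1), p r / (Nat.choose n r : ℝ) *
        ((B' n m r + B' n m (n-r) : ℕ) : ℝ) := by
  rw [← Finset.sum_product']
  have hmap : ∀ q ∈ Finset.range (m+1) ×ˢ Finset.range (c+1),
      q.1 + q.2 ∈ Finset.range (n+1) := by
    intro q hq
    simp only [Finset.mem_product, Finset.mem_range] at hq ⊢
    omega
  rw [← Finset.sum_fiberwise_of_maps_to hmap]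
  refine Finset.sum_congr rfl fun r hr => ?_
  have hr' : r ≤ n := by simpa [Nat.lt_succ_iff] using hr
  have step : ∀ q ∈ (Finset.range (m+1) ×ˢ Finset.range (c+1)).filter (fun q => q.1 + q.2 = r),
      (Nat.choose m q.1 : ℝ) * (Nat.choose c q.2 : ℝ) *
        (p (q.1+q.2) / (Nat.choose n (q.1+q.2) : ℝ) *
          ((m - min m (min ((m-q.1)+q.2) (n-((m-q.1)+q.2))) : ℕ) : ℝ))
      = p r / (Nat.choose n r : ℝ) *
          ((Nat.choose m q.1 * Nat.choose c q.2 *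
            (m - min m (min ((m-q.1)+q.2) (n-((m-q.1)+q.2)))) : ℕ) : ℝ) := by
    intro q hq
    simp only [Finset.mem_filter] at hq
    rw [hq.2]
    push_cast
    ring
  rw [Finset.sum_congr rfl step, ← Finset.mul_sum, ← Nat.cast_sum,
    Knat n m c r hmc hlec hr']

lemma H1 (n : ℕ) (hn : 1 ≤ n) (d : ℕ) (hd : 2*d ≤ n) (p : ℕ → ℝ) :
    ∑ r ∈ Finset.Icc 1 (n-1), (p r + p (n-r)) * B n d r
    = ∑ r ∈ Finset.range (n+1), p r / (Nat.choose n r : ℝ) *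
        ((B' n d r + B' n d (n-r) : ℕ) : ℝ) := by
  have hdn : d ≤ n := by omega
  have step1 : ∀ r ∈ Finset.Icc 1 (n-1),
      (p r + p (n-r)) * B n d r
      = p r * ((B' n d r : ℝ) / (Nat.choose n r : ℝ))
        + p (n-r) * ((B' n d r : ℝ) / (Nat.choose n r : ℝ)) := by
    intro r _
    rw [B_eq_B' n d r hdn]; ring
  rw [Finset.sum_congr rfl step1, Finset.sum_add_distrib]
  have step2 : ∑ r ∈ Finset.Icc 1 (n-1), p (n-r) * ((B' n d r : ℝ) / (Nat.choose n r : ℝ))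
      = ∑ r ∈ Finset.Icc 1 (n-1), p r * ((B' n d (n-r) : ℝ) / (Nat.choose n r : ℝ)) := by
    apply Finset.sum_nbij' (fun r => n - r) (fun r => n - r)
    · intro r hr
      simp only [Finset.mem_Icc] at hr ⊢; omega
    · intro r hr
      simp only [Finset.mem_Icc] at hr ⊢; omega
    · intro r hr
      simp only [Finset.mem_Icc] at hr; omega
    · intro r hr
      simp only [Finset.mem_Icc] at hr; omega
    · intro r hr
      simp only [Finset.mem_Icc] at hr
      have h1 : n - (n - r) = r := by omega
      have h2 : Nat.choose n (n - r) = Nat.choose n r := Nat.choose_symm (by omega)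
      rw [h1, h2]
  rw [step2, ← Finset.sum_add_distrib]
  have step3 : ∑ r ∈ Finset.Icc 1 (n-1),
      (p r * ((B' n d r : ℝ) / (Nat.choose n r : ℝ))
        + p r * ((B' n d (n-r) : ℝ) / (Nat.choose n r : ℝ)))
      = ∑ r ∈ Finset.Icc 1 (n-1), p r / (Nat.choose n r : ℝ) *
          ((B' n d r + B' n d (n-r) : ℕ) : ℝ) := by
    refine Finset.sum_congr rfl fun r _ => ?_
    push_cast; ring
  rw [step3]
  apply Finset.sum_subset
  · intro r hr
    simp only [Finset.mem_Icc] at hr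
    simp only [Finset.mem_range]
    omega
  · intro r hr hnr
    simp only [Finset.mem_range] at hr
    have hcase : r = 0 ∨ r = n := by
      rcases not_and_or.mp ((not_congr Finset.mem_Icc).mp hnr) with h | h <;> omega
    rcases hcase with h | h <;> subst h <;>
      simp [B'_zero, B'_n _ d hd]

lemma card_and_split {n : ℕ} (P Q : Fin n → Prop) [DecidablePred P] [DecidablePred Q] :
    (Finset.univ.filter fun i => P i).card
      = (Finset.univ.filter fun i => P i ∧ Q i).card
        + (Finset.univ.filter fun i => P i ∧ ¬ Q i).card := by
  rw [← Finset.filter_filter, ← Finset.filter_filter]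
  exact (Finset.card_filter_add_card_filter_not (s := Finset.univ.filter P) Q).symm

lemma ham_flip {n : ℕ} (x z : Point n) :
    hamming x (fun i => xor (x i) (z i))
      = (Finset.univ.filter fun i => x i = true ∧ z i = true).card
        + (Finset.univ.filter fun i => ¬ (x i = true) ∧ z i = true).card := by
  rw [hamming]
  have h1 : (Finset.univ.filter fun i => x i ≠ xor (x i) (z i))
      = Finset.univ.filter fun i => z i = true := by
    apply Finset.filter_congr
    intro i _
    cases hx : x i <;> cases hz : z i <;> simp [hx, hz]
  rw [h1]
  have h2 := card_and_split (fun i => z i = true) (fun i => x i = true)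
  rw [h2]
  congr 1
  · congr 1; apply Finset.filter_congr; intro i _; simp [and_comm]
  · congr 1; apply Finset.filter_congr; intro i _; simp [and_comm]

lemma A_le {n : ℕ} (x z : Point n) :
    (Finset.univ.filter fun i => x i = true ∧ z i = true).card ≤ OM x := by
  rw [OM, card_and_split (fun i => x i = true) (fun i => z i = true)]
  omega

lemma Bz_le {n : ℕ} (x z : Point n) :
    (Finset.univ.filter fun i => ¬ (x i = true) ∧ z i = true).card ≤ n - OM x := by
  have h0 := Finset.card_filter_add_card_filter_not
    (s := (Finset.univ : Finset (Fin n))) (p := fun i => x i = true)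
  simp only [Finset.card_univ, Fintype.card_fin] at h0
  have h2 := card_and_split (fun i => ¬ (x i = true)) (fun i => z i = true)
  rw [OM]
  omega

lemma OM_flip {n : ℕ} (x z : Point n) :
    OM (fun i => xor (x i) (z i))
      = (OM x - (Finset.univ.filter fun i => x i = true ∧ z i = true).card)
        + (Finset.univ.filter fun i => ¬ (x i = true) ∧ z i = true).card := by
  rw [OM]
  have h1 : (Finset.univ.filter fun i => xor (x i) (z i) = true)
      = Finset.univ.filter fun i =>
          (x i = true ∧ ¬ (z i = true)) ∨ (¬ (x i = true) ∧ z i = true) := by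
    apply Finset.filter_congr
    intro i _
    cases hx : x i <;> cases hz : z i <;> simp [hx, hz]
  rw [h1, Finset.filter_or, Finset.card_union_of_disjoint]
  · have h2 := card_and_split (fun i => x i = true) (fun i => z i = true)
    rw [OM]
    omega
  · rw [Finset.disjoint_left]
    intro i hi1 hi2
    simp only [Finset.mem_filter] at hi1 hi2
    tauto


/-- For every `n ≥ 1`, flip distribution `D`, and `x` with `d(x) = d`,
the expected decrease of the best-so-far potential in one mutation step from parent `x`
equals `h̃(d)`:  `E[d − min(d, d(mut_D(x)))] = h̃(d)`. -/
theorem stmt13 (n : ℕ) (hn : 1 ≤ n) (D : FlipDist n) (x : Point n) :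
    ∑ y : Point n, mutP D x y * ((dOf x - min (dOf x) (dOf y) : ℕ) : ℝ)
      = htilde D (dOf x) := by
  classical
  obtain ⟨m, hm⟩ : ∃ m, OM x = m := ⟨_, rfl⟩
  have hmn : m ≤ n := by
    rw [← hm, OM]
    have := Finset.card_filter_le (Finset.univ : Finset (Fin n)) (fun i => x i = true)
    simpa using this
  have hinv : Function.Involutive (fun (z : Point n) => (fun i => xor (x i) (z i) : Point n)) := by
    intro z; funext i; show xor (x i) (xor (x i) (z i)) = z i
    cases hx : x i <;> cases hz : z i <;> simp [hx, hz]
  have hflip : ∀ (F : Point n → ℝ),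
      ∑ y : Point n, F y = ∑ z : Point n, F (fun i => xor (x i) (z i)) := by
    intro F
    exact (Equiv.sum_comp (hinv.toPerm _) F).symm
  rcases le_or_gt m (n - m) with hcase | hcase
  · -- minority = ones, d = m
    have hdx : dOf x = m := by rw [dOf, hm]; omega
    have hz : ∀ z : Point n,
        mutP D x (fun i => xor (x i) (z i)) *
          ((dOf x - min (dOf x) (dOf (fun i => xor (x i) (z i))) : ℕ) : ℝ)
        = D.p ((Finset.univ.filter fun i => x i = true ∧ z i = true).card
              + (Finset.univ.filter fun i => ¬ (x i = true) ∧ z i = true).card)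
            / (Nat.choose n ((Finset.univ.filter fun i => x i = true ∧ z i = true).card
              + (Finset.univ.filter fun i => ¬ (x i = true) ∧ z i = true).card) : ℝ)
          * ((m - min m (min
              ((m - (Finset.univ.filter fun i => x i = true ∧ z i = true).card)
                + (Finset.univ.filter fun i => ¬ (x i = true) ∧ z i = true).card)
              (n - ((m - (Finset.univ.filter fun i => x i = true ∧ z i = true).card)
                + (Finset.univ.filter fun i => ¬ (x i = true) ∧ z i = true).card))) : ℕ) : ℝ) := by
      intro z
      have h1 := ham_flip x z
      have h3 : dOf (fun i => xor (x i) (z i))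
          = min ((m - (Finset.univ.filter fun i => x i = true ∧ z i = true).card)
              + (Finset.univ.filter fun i => ¬ (x i = true) ∧ z i = true).card)
            (n - ((m - (Finset.univ.filter fun i => x i = true ∧ z i = true).card)
              + (Finset.univ.filter fun i => ¬ (x i = true) ∧ z i = true).card)) := by
        rw [dOf, OM_flip x z, hm]
      simp only [mutP, h1]
      congr 2
      rw [hdx, h3]
    calc ∑ y : Point n, mutP D x y * ((dOf x - min (dOf x) (dOf y) : ℕ) : ℝ)
        = ∑ z : Point n, mutP D x (fun i => xor (x i) (z i)) *
            ((dOf x - min (dOf x) (dOf (fun i => xor (x i) (z i))) : ℕ) : ℝ) :=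
          hflip _
      _ = ∑ a ∈ Finset.range (m+1), ∑ b ∈ Finset.range (n-m+1),
            (Nat.choose m a : ℝ) * (Nat.choose (n-m) b : ℝ) *
            (D.p (a+b) / (Nat.choose n (a+b) : ℝ) *
              ((m - min m (min ((m-a)+b) (n-((m-a)+b))) : ℕ) : ℝ)) := by
          rw [Finset.sum_congr rfl fun z _ => hz z]
          exact sum_point_split n m x hm
            (fun a b => D.p (a+b) / (Nat.choose n (a+b) : ℝ) *
              ((m - min m (min ((m-a)+b) (n-((m-a)+b))) : ℕ) : ℝ))
      _ = ∑ r ∈ Finset.range (n+1), D.p r / (Nat.choose n r : ℝ) *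
            ((B' n m r + B' n m (n-r) : ℕ) : ℝ) :=
          MAIN2 n m (n-m) (by omega) hcase D.p
      _ = htilde D (dOf x) := by
          rw [hdx, htilde]
          exact (H1 n hn m (by omega) D.p).symm
  · -- minority = zeros, d = n - m
    have hdx : dOf x = n - m := by rw [dOf, hm]; omega
    have hz : ∀ z : Point n,
        mutP D x (fun i => xor (x i) (z i)) *
          ((dOf x - min (dOf x) (dOf (fun i => xor (x i) (z i))) : ℕ) : ℝ)
        = D.p ((Finset.univ.filter fun i => x i = true ∧ z i = true).card
              + (Finset.univ.filter fun i => ¬ (x i = true) ∧ z i = true).card)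
            / (Nat.choose n ((Finset.univ.filter fun i => x i = true ∧ z i = true).card
              + (Finset.univ.filter fun i => ¬ (x i = true) ∧ z i = true).card) : ℝ)
          * (((n-m) - min (n-m) (min
              (((n-m) - (Finset.univ.filter fun i => ¬ (x i = true) ∧ z i = true).card)
                + (Finset.univ.filter fun i => x i = true ∧ z i = true).card)
              (n - (((n-m) - (Finset.univ.filter fun i => ¬ (x i = true) ∧ z i = true).card)
                + (Finset.univ.filter fun i => x i = true ∧ z i = true).card))) : ℕ) : ℝ) := by
      intro z
      have h1 := ham_flip x z
      have hAz := A_le x z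
      have hBz := Bz_le x z
      rw [hm] at hAz hBz
      have h3 : dOf (fun i => xor (x i) (z i))
          = min ((m - (Finset.univ.filter fun i => x i = true ∧ z i = true).card)
              + (Finset.univ.filter fun i => ¬ (x i = true) ∧ z i = true).card)
            (n - ((m - (Finset.univ.filter fun i => x i = true ∧ z i = true).card)
              + (Finset.univ.filter fun i => ¬ (x i = true) ∧ z i = true).card)) := by
        rw [dOf, OM_flip x z, hm]
      simp only [mutP, h1]
      congr 2
      rw [hdx, h3]
      omega
    calc ∑ y : Point n, mutP D x y * ((dOf x - min (dOf x) (dOf y) : ℕ) : ℝ)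
        = ∑ z : Point n, mutP D x (fun i => xor (x i) (z i)) *
            ((dOf x - min (dOf x) (dOf (fun i => xor (x i) (z i))) : ℕ) : ℝ) :=
          hflip _
      _ = ∑ a ∈ Finset.range (m+1), ∑ b ∈ Finset.range (n-m+1),
            (Nat.choose m a : ℝ) * (Nat.choose (n-m) b : ℝ) *
            (D.p (a+b) / (Nat.choose n (a+b) : ℝ) *
              (((n-m) - min (n-m) (min (((n-m)-b)+a) (n-(((n-m)-b)+a))) : ℕ) : ℝ)) := by
          rw [Finset.sum_congr rfl fun z _ => hz z]
          exact sum_point_split n m x hm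
            (fun a b => D.p (a+b) / (Nat.choose n (a+b) : ℝ) *
              (((n-m) - min (n-m) (min (((n-m)-b)+a) (n-(((n-m)-b)+a))) : ℕ) : ℝ))
      _ = ∑ b ∈ Finset.range (n-m+1), ∑ a ∈ Finset.range (m+1),
            (Nat.choose (n-m) b : ℝ) * (Nat.choose m a : ℝ) *
            (D.p (b+a) / (Nat.choose n (b+a) : ℝ) *
              (((n-m) - min (n-m) (min (((n-m)-b)+a) (n-(((n-m)-b)+a))) : ℕ) : ℝ)) := by
          rw [Finset.sum_comm]
          refine Finset.sum_congr rfl fun b _ => Finset.sum_congr rfl fun a _ => ?_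
          rw [Nat.add_comm b a]
          ring
      _ = ∑ r ∈ Finset.range (n+1), D.p r / (Nat.choose n r : ℝ) *
            ((B' n (n-m) r + B' n (n-m) (n-r) : ℕ) : ℝ) :=
          MAIN2 n (n-m) m (by omega) (by omega) D.p
      _ = htilde D (dOf x) := by
          rw [hdx, htilde]
          exact (H1 n hn (n-m) (by omega) D.p).symm
end

section
/- There exists n_0 (one may take n_0 = ⌈e^{20}⌉) such that for all n ≥ n_0, all integers d with 1 ≤ d ≤ n/(ln n)², and all integers r with 12 ≤ r ≤ n−1, it holds that B(n,d,r) < (d/n)². -/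
open scoped BigOperators ENNReal Classical

/-!
Only indices `i ≥ ⌈r/2⌉ ≥ 6` contribute to `B(n,d,r)`, and such a term forces `r ≤ 2i ≤ 2d`,
so `r ≤ n/2`. Lowering the lower index of `C(n, r)` one step at a time gives
`C(n, r-i) (n-r+1)^i ≤ C(n, r) r^{(i)}`, and `C(d,i) r^{(i)} = d^{(i)} C(r,i) ≤ (4d)^i`; hence the
hypergeometric weight `C(d,i) C(n-d,r-i) / C(n,r)` is at most `(8d/n)^i`. With
`x = d/n ≤ 1/ln² n ≤ 1/400` the whole sum is at most `(m+1)(16x)^m ≤ (32x)^6 < x²`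
for `m = ⌈r/2⌉`.
-/

namespace Nat

theorem choose_sub_mul_pow_le_choose_mul_descFactorial {n r : ℕ} (hrn : r ≤ n) :
    ∀ {i : ℕ}, i ≤ r → n.choose (r - i) * (n - r + 1) ^ i ≤ n.choose r * r.descFactorial i
  | 0, _ => by simp
  | i + 1, hir => by
    have step : n.choose (r - (i + 1)) * (n - r + 1) ≤ n.choose (r - i) * (r - i) := by
      have h := choose_succ_right_eq n (r - (i + 1))
      rw [show r - (i + 1) + 1 = r - i by omega] at h
      calc n.choose (r - (i + 1)) * (n - r + 1)
          ≤ n.choose (r - (i + 1)) * (n - (r - (i + 1))) := Nat.mul_le_mul_left _ (by omega)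
        _ = n.choose (r - i) * (r - i) := h.symm
    calc n.choose (r - (i + 1)) * (n - r + 1) ^ (i + 1)
        = n.choose (r - (i + 1)) * (n - r + 1) * (n - r + 1) ^ i := by ring
      _ ≤ n.choose (r - i) * (r - i) * (n - r + 1) ^ i := Nat.mul_le_mul_right _ step
      _ = n.choose (r - i) * (n - r + 1) ^ i * (r - i) := by ring
      _ ≤ n.choose r * r.descFactorial i * (r - i) :=
          Nat.mul_le_mul_right _ (choose_sub_mul_pow_le_choose_mul_descFactorial hrn (by omega))
      _ = n.choose r * r.descFactorial (i + 1) := by rw [descFactorial_succ]; ring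

theorem choose_mul_choose_mul_pow_le {n d r i : ℕ} (h2r : 2 * r ≤ n) (hir : i ≤ r)
    (hri : r ≤ 2 * i) :
    d.choose i * (n - d).choose (r - i) * n ^ i ≤ n.choose r * (8 * d) ^ i := by
  have hchoose : r.choose i ≤ 4 ^ i := calc
    r.choose i ≤ 2 ^ r := choose_le_two_pow r i
    _ ≤ 2 ^ (2 * i) := Nat.pow_le_pow_right (by norm_num) hri
    _ = 4 ^ i := by rw [pow_mul]; norm_num
  calc d.choose i * (n - d).choose (r - i) * n ^ i
      ≤ d.choose i * n.choose (r - i) * (2 * (n - r + 1)) ^ i := by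
        gcongr <;> omega
    _ = d.choose i * (n.choose (r - i) * (n - r + 1) ^ i) * 2 ^ i := by rw [mul_pow]; ring
    _ ≤ d.choose i * (n.choose r * r.descFactorial i) * 2 ^ i := by
        gcongr d.choose i * ?_ * _
        exact choose_sub_mul_pow_le_choose_mul_descFactorial (by omega) hir
    _ = n.choose r * (d.descFactorial i * r.choose i) * 2 ^ i := by
        rw [descFactorial_eq_factorial_mul_choose, descFactorial_eq_factorial_mul_choose]; ring
    _ ≤ n.choose r * (d ^ i * 4 ^ i) * 2 ^ i := by
        gcongr
        exact descFactorial_le_pow d i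
    _ = n.choose r * (8 * d) ^ i := by
        rw [show 8 * d = d * 4 * 2 by ring, mul_pow, mul_pow]; ring

end Nat

theorem choose_mul_choose_div_choose_le {n d r i : ℕ} (hn : 0 < n) (h2r : 2 * r ≤ n)
    (hir : i ≤ r) (hri : r ≤ 2 * i) :
    (d.choose i * (n - d).choose (r - i) / n.choose r : ℝ) ≤ (8 * d / n) ^ i := by
  have hchoose : (0 : ℝ) < n.choose r := by exact_mod_cast Nat.choose_pos (by omega)
  have hbound : (d.choose i * (n - d).choose (r - i) * n ^ i : ℝ) ≤ n.choose r * (8 * d) ^ i := by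
    exact_mod_cast Nat.choose_mul_choose_mul_pow_le h2r hir hri
  rw [div_le_iff₀ hchoose, div_pow, div_mul_eq_mul_div, le_div_iff₀ (by positivity)]
  linarith

theorem B_term_le {n d r i : ℕ} (hn : 0 < n) (h4d : 4 * d ≤ n) (hi : (r + 1) / 2 ≤ i)
    (hid : i ≤ d) (hir : i ≤ r) :
    ((2 * i - r : ℕ) : ℝ) * d.choose i * (n - d).choose (r - i) / n.choose r ≤
      (16 * d / n) ^ i := by
  have hweight := choose_mul_choose_div_choose_le (d := d) hn (by omega) hir (by omega)
  have hcoeff : ((2 * i - r : ℕ) : ℝ) ≤ 2 ^ i := by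
    exact_mod_cast (show 2 * i - r ≤ i by omega).trans Nat.lt_two_pow_self.le
  calc ((2 * i - r : ℕ) : ℝ) * d.choose i * (n - d).choose (r - i) / n.choose r
      = ((2 * i - r : ℕ) : ℝ) * (d.choose i * (n - d).choose (r - i) / n.choose r) := by ring
    _ ≤ 2 ^ i * (8 * d / n) ^ i := by gcongr
    _ = (16 * d / n) ^ i := by rw [← mul_pow]; ring

theorem B_le_succ_mul_pow {n d r : ℕ} (hn : 0 < n) (h16d : 16 * d ≤ n) :
    B n d r ≤ (((r + 1) / 2 : ℕ) + 1) * (16 * d / n : ℝ) ^ ((r + 1) / 2) := by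
  set m := (r + 1) / 2
  have hq : (16 * d / n : ℝ) ≤ 1 := by
    rw [div_le_one (by exact_mod_cast hn)]; exact_mod_cast h16d
  have hterm : ∀ i ∈ Finset.Icc (max m (r + d - n)) (min d r),
      ((2 * i - r : ℕ) : ℝ) * d.choose i * (n - d).choose (r - i) / n.choose r ≤
        (16 * d / n : ℝ) ^ m := by
    intro i hi
    simp only [Finset.mem_Icc, max_le_iff, le_min_iff] at hi
    exact (B_term_le hn (by omega) hi.1.1 hi.2.1 hi.2.2).trans
      (pow_le_pow_of_le_one (by positivity) hq hi.1.1)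
  have hcard : (Finset.Icc (max m (r + d - n)) (min d r)).card ≤ m + 1 := by
    rw [Nat.card_Icc]; omega
  calc B n d r ≤ (Finset.Icc (max m (r + d - n)) (min d r)).card * (16 * d / n : ℝ) ^ m := by
        rw [B, ← nsmul_eq_mul, ← Finset.sum_const]; exact Finset.sum_le_sum hterm
    _ ≤ ((m : ℕ) + 1) * (16 * d / n : ℝ) ^ m := by gcongr; exact_mod_cast hcard

theorem succ_mul_pow_lt_sq {x : ℝ} (hx : 0 < x) (hx400 : x ≤ 1 / 400) {m : ℕ} (hm : 6 ≤ m) :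
    ((m : ℝ) + 1) * (16 * x) ^ m < x ^ 2 := by
  have hm2 : (m : ℝ) + 1 ≤ 2 ^ m := by exact_mod_cast Nat.lt_two_pow_self
  have hx4 : x ^ 4 ≤ (1 / 400) ^ 4 := pow_le_pow_left₀ hx.le hx400 4
  calc ((m : ℝ) + 1) * (16 * x) ^ m
      ≤ 2 ^ m * (16 * x) ^ m := by gcongr
    _ = (32 * x) ^ m := by rw [← mul_pow]; ring
    _ ≤ (32 * x) ^ 6 := pow_le_pow_of_le_one (by positivity) (by linarith) hm
    _ = 32 ^ 6 * x ^ 4 * x ^ 2 := by ring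
    _ < 1 * x ^ 2 := by gcongr; linarith
    _ = x ^ 2 := one_mul _

/-- There exists `n₀` such that for all `n ≥ n₀`, all `d` with
`1 ≤ d ≤ n/(ln n)²`, and all `r` with `12 ≤ r ≤ n−1`, it holds that `B(n,d,r) < (d/n)²`. -/
theorem stmt14 :
    ∃ n0 : ℕ, ∀ n : ℕ, n0 ≤ n → ∀ d : ℕ, 1 ≤ d → (d : ℝ) ≤ (n : ℝ) / (Real.log n)^2 →
      ∀ r : ℕ, 12 ≤ r → r ≤ n - 1 → B n d r < ((d : ℝ) / (n : ℝ))^2 := by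
  refine ⟨⌈Real.exp 20⌉₊, fun n hn d hd hdn r hr _ => ?_⟩
  have hexp : Real.exp 20 ≤ n := Nat.ceil_le.mp hn
  have hnR : (0 : ℝ) < n := (Real.exp_pos 20).trans_le hexp
  have hlog : 20 ≤ Real.log n := (Real.le_log_iff_exp_le hnR).mpr hexp
  have hdn400 : (d : ℝ) ≤ n / 400 :=
    hdn.trans (div_le_div_of_nonneg_left hnR.le (by norm_num) (by nlinarith))
  have hx : (0 : ℝ) < d / n := div_pos (by exact_mod_cast hd) hnR
  have hx400 : (d / n : ℝ) ≤ 1 / 400 := by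
    rw [div_le_iff₀ hnR]; linarith
  have h16d : 16 * d ≤ n := by exact_mod_cast (by linarith : (16 * d : ℝ) ≤ n)
  calc B n d r ≤ (((r + 1) / 2 : ℕ) + 1) * (16 * d / n : ℝ) ^ ((r + 1) / 2) :=
        B_le_succ_mul_pow (by exact_mod_cast hnR) h16d
    _ = (((r + 1) / 2 : ℕ) + 1) * (16 * (d / n) : ℝ) ^ ((r + 1) / 2) := by rw [mul_div_assoc]
    _ < (d / n : ℝ) ^ 2 := succ_mul_pow_lt_sq hx hx400 (by omega)
end

section
/- There exists n_0 such that for all n ≥ n_0, every flip distribution D on {0,1,…,n}, and every integer d with 1 ≤ d ≤ d_0, it holds that h(d) ≤ (1 + 1/ln n)·(p_1 + p_{n−1})·d/n. -/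
open scoped BigOperators ENNReal Classical

/-- `d_0 = ⌊(p_1 + p_{n−1})·n/(ln n)²⌋`. -/
noncomputable def d0 {n : ℕ} (D : FlipDist n) : ℕ :=
  ⌊(D.p 1 + D.p (n-1)) * n / (Real.log n)^2⌋₊

/-- `h(d) = h̃(d)` for `d ≤ d_0`, and `h(d) = n` for `d > d_0`. -/
noncomputable def hfun {n : ℕ} (D : FlipDist n) (d : ℕ) : ℝ :=
  if d ≤ d0 D then htilde D d else n

/-!
The `r = 1` term of `h̃(d)` is exactly `(p₁ + p_{n-1})·d/n`. For `r ≥ 2` the hypergeometric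
symmetry `C(d,i)·C(n-d,r-i)/C(n,r) = C(r,i)·C(n-r,d-i)/C(n,d)` bounds the `i`-th summand of
`B(n,d,r)` by `2i·(8d/n)^i`, and only `i ≥ 2` contributes, so `B(n,d,r) = O((d/n)²)` uniformly
in `r`; since the weights `p_r + p_{n-r}` sum to at most `2`, the remainder is `O((d/n)²)`.
Finally `d ≤ d₀` gives `d/n ≤ (p₁ + p_{n-1})/(ln n)²`, which turns `O((d/n)²)` into
`(p₁ + p_{n-1})·d/(n ln n)` once `ln n` is large.
-/

open Finset

namespace Nat

theorem choose_mul_choose_sub_comm (m a b : ℕ) :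
    m.choose a * (m - a).choose b = m.choose b * (m - b).choose a := by
  have hab := choose_mul (n := m) (le_add_right a b)
  have hba := choose_mul (n := m) (le_add_left b a)
  rw [Nat.add_sub_cancel_left] at hab
  rw [Nat.add_sub_cancel] at hba
  rw [← hab, ← hba, choose_symm_add]

/-- Both sides count the pairs of a `d`-set and an `r`-set in an `n`-set meeting in `i` points. -/
theorem choose_mul_choose_mul_choose_comm {n d r i : ℕ} (hid : i ≤ d) (hir : i ≤ r) :
    n.choose d * d.choose i * (n - d).choose (r - i) =
      n.choose r * r.choose i * (n - r).choose (d - i) := by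
  rw [choose_mul hid, choose_mul hir, mul_assoc, mul_assoc]
  have h := choose_mul_choose_sub_comm (n - i) (d - i) (r - i)
  rw [show n - i - (d - i) = n - d by omega, show n - i - (r - i) = n - r by omega] at h
  rw [h]

theorem choose_sub_mul_pow_le (n d : ℕ) {i : ℕ} (hid : i ≤ d) :
    n.choose (d - i) * (n - d) ^ i ≤ n.choose d * d ^ i := by
  induction i with
  | zero => simp
  | succ i ih =>
    have hstep : n.choose (d - (i + 1)) * (n - d) ≤ n.choose (d - i) * d :=
      calc n.choose (d - (i + 1)) * (n - d)
          ≤ n.choose (d - (i + 1)) * (n - (d - (i + 1))) := by gcongr; omega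
        _ = n.choose (d - i) * (d - i) := by
            rw [← choose_succ_right_eq, show d - (i + 1) + 1 = d - i by omega]
        _ ≤ n.choose (d - i) * d := by gcongr; omega
    calc n.choose (d - (i + 1)) * (n - d) ^ (i + 1)
        = n.choose (d - (i + 1)) * (n - d) * (n - d) ^ i := by ring
      _ ≤ n.choose (d - i) * d * (n - d) ^ i := by gcongr
      _ = d * (n.choose (d - i) * (n - d) ^ i) := by ring
      _ ≤ d * (n.choose d * d ^ i) := Nat.mul_le_mul_left _ (ih (by omega))
      _ = n.choose d * d ^ (i + 1) := by ring

end Nat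

theorem sum_Ico_two_mul_pow_le {x : ℝ} (hx₀ : 0 ≤ x) (hx : x ≤ 1 / 2) (N : ℕ) :
    ∑ i ∈ Ico 2 N, 2 * (i : ℝ) * x ^ i ≤ 12 * x ^ 2 := by
  have key : ∀ M : ℕ, ∑ k ∈ range M, 2 * ((2 + k : ℕ) : ℝ) * x ^ (2 + k)
      + (4 * M + 12) * x ^ (M + 2) ≤ 12 * x ^ 2 := by
    intro M
    induction M with
    | zero => simp
    | succ M ih =>
      have hxM : 0 ≤ x ^ (M + 2) := by positivity
      rw [sum_range_succ]
      push_cast at ih ⊢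
      have : (4 * ((M : ℝ) + 1) + 12) * x ^ (M + 1 + 2) ≤ (2 * M + 8) * x ^ (M + 2) := by
        rw [pow_succ' x (M + 2), ← mul_assoc]
        gcongr
        nlinarith
      rw [add_comm 2 M]
      nlinarith
  rw [sum_Ico_eq_sum_range]
  have hM := key (N - 2)
  have : 0 ≤ (4 * ((N - 2 : ℕ) : ℝ) + 12) * x ^ (N - 2 + 2) := by positivity
  linarith

theorem B_one {n d : ℕ} (hd : 1 ≤ d) (hdn : d ≤ n) : B n d 1 = d / n := by
  rw [B, show max ((1 + 1) / 2) (1 + d - n) = 1 by omega, min_eq_right hd, Icc_self,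
    sum_singleton]
  simp

theorem B_summand_le {n d r i : ℕ} (hdn : 2 * d ≤ n) (hid : i ≤ d) (hir : i ≤ r)
    (hri : r < 2 * i) :
    ((2 * i - r : ℕ) : ℝ) * d.choose i * (n - d).choose (r - i) / n.choose r
      ≤ 2 * i * (8 * d / n) ^ i := by
  have hdpos : (0 : ℝ) < n - d := by
    have : d < n := by omega
    rw [sub_pos]; exact_mod_cast this
  have hCnd : (0 : ℝ) < n.choose d := by exact_mod_cast Nat.choose_pos (by omega)
  have hCnr : (0 : ℝ) < n.choose r := by exact_mod_cast Nat.choose_pos (by omega)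
  have hsymm : (n.choose d * d.choose i * (n - d).choose (r - i) : ℝ) =
      n.choose r * r.choose i * (n - r).choose (d - i) := by
    exact_mod_cast Nat.choose_mul_choose_mul_choose_comm hid hir
  have hdesc : ((n - r).choose (d - i) : ℝ) * (n - d) ^ i ≤ n.choose d * d ^ i := by
    have h : (n - r).choose (d - i) * (n - d) ^ i ≤ n.choose d * d ^ i :=
      (Nat.mul_le_mul_right _ (Nat.choose_le_choose _ (Nat.sub_le n r))).trans
        (Nat.choose_sub_mul_pow_le n d hid)
    have h' : (((n - r).choose (d - i) * (n - d) ^ i : ℕ) : ℝ) ≤ (n.choose d * d ^ i : ℕ) :=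
      by exact_mod_cast h
    push_cast [Nat.cast_sub (show d ≤ n by omega)] at h'
    exact h'
  have hri' : (r.choose i : ℝ) ≤ 4 ^ i := by
    have h := (Nat.choose_le_two_pow r i).trans (Nat.pow_le_pow_right two_pos hri.le)
    rw [pow_mul] at h
    exact_mod_cast h
  have hratio : 4 * (d / (n - d : ℝ)) ≤ 8 * d / n := by
    rw [mul_div_assoc', div_le_div_iff₀ hdpos (by linarith)]
    have : (2 * d : ℝ) ≤ n := by exact_mod_cast hdn
    nlinarith [(Nat.cast_nonneg d : (0 : ℝ) ≤ d)]
  calc ((2 * i - r : ℕ) : ℝ) * d.choose i * (n - d).choose (r - i) / n.choose r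
      = ((2 * i - r : ℕ) : ℝ) * r.choose i * ((n - r).choose (d - i) / n.choose d) := by
        field_simp
        linear_combination ((2 * i - r : ℕ) : ℝ) * hsymm
    _ ≤ 2 * i * 4 ^ i * (d / (n - d : ℝ)) ^ i := by
        rw [div_pow]
        gcongr ?_ * ?_ * ?_
        · exact_mod_cast Nat.sub_le _ _
        · rw [div_le_div_iff₀ hCnd (by positivity)]; linarith
    _ = 2 * i * (4 * (d / (n - d : ℝ))) ^ i := by ring
    _ ≤ 2 * i * (8 * d / n) ^ i := by gcongr

theorem B_le {n d r : ℕ} (hdn : 16 * d ≤ n) (hr : 2 ≤ r) :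
    B n d r ≤ 768 * ((d : ℝ) / n) ^ 2 := by
  set x : ℝ := 8 * d / n
  have hx₀ : 0 ≤ x := by positivity
  have hx : x ≤ 1 / 2 := by
    rcases Nat.eq_zero_or_pos n with rfl | hn
    · simp [x]
    have : (16 * d : ℝ) ≤ n := by exact_mod_cast hdn
    rw [div_le_iff₀ (by exact_mod_cast hn)]
    linarith
  -- only summands with `r < 2 * i` survive the truncated subtraction `2 * i - r`
  rw [B, ← sum_filter_of_ne (p := fun i => r < 2 * i) (fun i _ h => by
    by_contra hi
    exact h (by rw [Nat.sub_eq_zero_of_le (by omega)]; simp))]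
  calc _ ≤ ∑ i ∈ (Icc (max ((r + 1) / 2) (r + d - n)) (min d r)).filter (fun i => r < 2 * i),
        2 * (i : ℝ) * x ^ i := by
        refine sum_le_sum fun i hi => ?_
        simp only [mem_filter, mem_Icc] at hi
        exact B_summand_le (by omega) (by omega) (by omega) hi.2
    _ ≤ ∑ i ∈ Ico 2 (d + 1), 2 * (i : ℝ) * x ^ i := by
        refine sum_le_sum_of_subset_of_nonneg (fun i hi => ?_) (fun _ _ _ => by positivity)
        simp only [mem_filter, mem_Icc, mem_Ico] at hi ⊢
        omega
    _ ≤ 12 * x ^ 2 := sum_Ico_two_mul_pow_le hx₀ hx _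
    _ = 768 * ((d : ℝ) / n) ^ 2 := by ring

namespace FlipDist

variable {n : ℕ} (D : FlipDist n)

theorem sum_le_one (s : Finset ℕ) : ∑ k ∈ s, D.p k ≤ 1 := by
  calc ∑ k ∈ s, D.p k = ∑ k ∈ s ∩ range (n + 1), D.p k :=
        (sum_subset inter_subset_left fun k hks hk =>
          D.zero_of_gt k (by simpa [hks] using hk)).symm
    _ ≤ ∑ k ∈ range (n + 1), D.p k :=
        sum_le_sum_of_subset_of_nonneg inter_subset_right fun k _ _ => D.nonneg k
    _ = 1 := D.sum_eq

theorem sum_comp_le_one {s : Finset ℕ} {f : ℕ → ℕ} (hf : Set.InjOn f s) :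
    ∑ k ∈ s, D.p (f k) ≤ 1 := by
  rw [← sum_image hf]
  exact D.sum_le_one _

theorem add_le_one {i j : ℕ} (hij : i ≠ j) : D.p i + D.p j ≤ 1 := by
  simpa [sum_pair hij] using D.sum_le_one {i, j}

theorem htilde_le {d : ℕ} (hd : 1 ≤ d) (hdn : 16 * d ≤ n) :
    htilde D d ≤ (D.p 1 + D.p (n - 1)) * (d / n) + 1536 * ((d : ℝ) / n) ^ 2 := by
  have hsplit : Icc 1 (n - 1) = insert 1 (Icc 2 (n - 1)) := by
    ext r; simp only [mem_Icc, mem_insert]; omega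
  rw [htilde, hsplit, sum_insert (by simp), B_one hd (by omega)]
  gcongr
  have hinj : Set.InjOn (n - ·) (Icc 2 (n - 1) : Finset ℕ) := fun a ha b hb hab => by
    simp only [coe_Icc, Set.mem_Icc] at ha hb
    simp only at hab
    omega
  calc ∑ r ∈ Icc 2 (n - 1), (D.p r + D.p (n - r)) * B n d r
      ≤ ∑ r ∈ Icc 2 (n - 1), (D.p r + D.p (n - r)) * (768 * ((d : ℝ) / n) ^ 2) := by
        refine sum_le_sum fun r hr => ?_
        have := add_nonneg (D.nonneg r) (D.nonneg (n - r))
        gcongr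
        exact B_le hdn (mem_Icc.mp hr).1
    _ = (∑ r ∈ Icc 2 (n - 1), D.p r + ∑ r ∈ Icc 2 (n - 1), D.p (n - r))
          * (768 * ((d : ℝ) / n) ^ 2) := by rw [← sum_mul, sum_add_distrib]
    _ ≤ 2 * (768 * ((d : ℝ) / n) ^ 2) := by
        gcongr
        linarith [D.sum_le_one (Icc 2 (n - 1)), D.sum_comp_le_one hinj]
    _ = 1536 * ((d : ℝ) / n) ^ 2 := by ring

theorem mul_log_sq_le_of_le_d0 {d : ℕ} (hd : d ≤ d0 D) :
    d * Real.log n ^ 2 ≤ (D.p 1 + D.p (n - 1)) * n := by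
  have hc : 0 ≤ (D.p 1 + D.p (n - 1)) * n := by
    have := add_nonneg (D.nonneg 1) (D.nonneg (n - 1)); positivity
  have hd' := (Nat.le_floor_iff (by positivity)).mp hd
  rcases (sq_nonneg (Real.log n)).eq_or_lt with hL | hL
  · rw [← hL, mul_zero]; exact hc
  · rwa [le_div_iff₀ hL] at hd'

end FlipDist

/-- There exists `n₀` such that for all `n ≥ n₀`, every flip
distribution `D`, and every `d` with `1 ≤ d ≤ d₀`, it holds that
`h(d) ≤ (1 + 1/ln n)·(p₁ + p_{n−1})·d/n`. -/
theorem stmt15 :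
    ∃ n0 : ℕ, ∀ n : ℕ, n0 ≤ n → ∀ D : FlipDist n, ∀ d : ℕ, 1 ≤ d → d ≤ d0 D →
      hfun D d ≤ (1 + 1 / Real.log n) * (D.p 1 + D.p (n-1)) * d / n := by
  refine ⟨⌈Real.exp 1536⌉₊ + 3, fun n hn D d hd hdd0 => ?_⟩
  have hn₀ : (0 : ℝ) < n := by exact_mod_cast (by omega : 0 < n)
  set L := Real.log n
  have hL : 1536 ≤ L := (Real.le_log_iff_exp_le hn₀).mpr <|
    (Nat.le_ceil _).trans (by exact_mod_cast (by omega : ⌈Real.exp 1536⌉₊ ≤ n))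
  set c := D.p 1 + D.p (n - 1)
  have hc₀ : 0 ≤ c := add_nonneg (D.nonneg 1) (D.nonneg (n - 1))
  have hc : c ≤ 1 := D.add_le_one (by omega)
  have hdL : d * L ^ 2 ≤ c * n := D.mul_log_sq_le_of_le_d0 hdd0
  have hdn : (d : ℝ) / n ≤ c / L ^ 2 := by
    rw [div_le_div_iff₀ hn₀ (by positivity)]; linarith
  have h16 : 16 * d ≤ n := by
    have : (16 : ℝ) * d ≤ n :=
      calc (16 : ℝ) * d ≤ L ^ 2 * d := by gcongr; nlinarith
        _ = d * L ^ 2 := mul_comm _ _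
        _ ≤ c * n := hdL
        _ ≤ n := mul_le_of_le_one_left hn₀.le hc
    exact_mod_cast this
  rw [hfun, if_pos hdd0]
  calc htilde D d ≤ c * (d / n) + 1536 * ((d : ℝ) / n) ^ 2 := D.htilde_le hd h16
    _ ≤ c * (d / n) + 1536 * (c / L ^ 2) * (d / n) := by rw [sq, ← mul_assoc]; gcongr
    _ ≤ c * (d / n) + L * (c / L ^ 2) * (d / n) := by gcongr
    _ = (1 + 1 / L) * c * d / n := by field_simp
end

section
/- There exists n_0 (one may take n_0 = ⌈e²⌉) such that for all n ≥ n_0 and every flip distribution D on {0,1,…,n}, the function h is monotonically increasing on {0,1,…,n}, i.e., h(d) ≤ h(d+1) for all 0 ≤ d ≤ n−1. -/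
open scoped BigOperators ENNReal Classical

/-!
`B(n, d, r)` is the expectation of `(2I - r)⁺` for `I` hypergeometric: the number of elements
of a fixed `d`-subset of an `n`-set hit by a uniform `r`-subset. By Pascal's rule, enlarging the
fixed subset by one element can only increase `E[w(I)]` for monotone `w`, so `h̃` is increasing.
Moreover `(2I - r)⁺ ≤ r`, so `h̃(d) ≤ ∑ (p_r + p_{n-r}) r = n ∑ p_r ≤ n`, and monotonicity survives
the switch from `h̃` to the constant `n` after `d₀`.
-/

open Finset

section WeightedVandermonde

/-- `∑ᵢ w i · C(d, i) · C(m, r - i)`: the sum of `w` over the `r`-subsets of a `(d + m)`-set,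
evaluated at the number of elements taken from a fixed `d`-subset. -/
noncomputable def weightedVandermonde (w : ℕ → ℝ) (d m r : ℕ) : ℝ :=
  ∑ i ∈ range (r + 1), w i * d.choose i * m.choose (r - i)

variable (w : ℕ → ℝ) (d m r : ℕ)

lemma weightedVandermonde_succ_right :
    weightedVandermonde w d (m + 1) r = weightedVandermonde w d m r +
      ∑ j ∈ range r, w j * d.choose j * m.choose (r - 1 - j) := by
  have pascal : ∀ i ∈ range r, w i * d.choose i * (m + 1).choose (r - i) =
      w i * d.choose i * m.choose (r - i) + w i * d.choose i * m.choose (r - 1 - i) := by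
    intro i hi
    rw [show r - i = r - 1 - i + 1 by grind, Nat.choose_succ_succ']
    push_cast
    ring
  unfold weightedVandermonde
  rw [sum_range_succ, sum_range_succ (fun i => w i * d.choose i * m.choose (r - i)),
    sum_congr rfl pascal, sum_add_distrib]
  simp only [Nat.sub_self, Nat.choose_zero_right]
  ring

lemma weightedVandermonde_succ_left :
    weightedVandermonde w (d + 1) m r = weightedVandermonde w d m r +
      ∑ j ∈ range r, w (j + 1) * d.choose j * m.choose (r - 1 - j) := by
  have pascal : ∀ j ∈ range r, w (j + 1) * (d + 1).choose (j + 1) * m.choose (r - (j + 1)) =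
      w (j + 1) * d.choose (j + 1) * m.choose (r - (j + 1)) +
        w (j + 1) * d.choose j * m.choose (r - 1 - j) := by
    intro j hj
    rw [show r - (j + 1) = r - 1 - j by omega, Nat.choose_succ_succ']
    push_cast
    ring
  unfold weightedVandermonde
  rw [sum_range_succ', sum_range_succ' (fun i => w i * d.choose i * m.choose (r - i)),
    sum_congr rfl pascal, sum_add_distrib]
  simp only [Nat.choose_zero_right]
  ring

lemma weightedVandermonde_succ_right_le_succ_left (hw : Monotone w) :
    weightedVandermonde w d (m + 1) r ≤ weightedVandermonde w (d + 1) m r := by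
  rw [weightedVandermonde_succ_right, weightedVandermonde_succ_left]
  gcongr with j
  exact hw j.le_succ

lemma weightedVandermonde_le {c : ℝ} (hw : ∀ i ≤ r, w i ≤ c) :
    weightedVandermonde w d m r ≤ c * (d + m).choose r := by
  rw [Nat.add_choose_eq, Nat.sum_antidiagonal_eq_sum_range_succ_mk, Nat.cast_sum, mul_sum]
  refine sum_le_sum fun i hi => ?_
  rw [mul_assoc, Nat.cast_mul]
  gcongr
  exact hw i (Nat.lt_succ_iff.mp (mem_range.mp hi))

end WeightedVandermonde

/-- The truncated subtraction `2 * i - r` in `ℕ` is the positive part of `2i - r`. -/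
lemma B_eq_weightedVandermonde_div {n d : ℕ} (r : ℕ) (hd : d ≤ n) :
    B n d r = weightedVandermonde (fun i => ((2 * i - r : ℕ) : ℝ)) d (n - d) r /
      n.choose r := by
  rw [B, ← sum_div, weightedVandermonde]
  congr 1
  refine sum_subset (fun i hi => by grind) fun i hi hni => ?_
  rw [mem_Icc, not_and_or, not_le, not_le, lt_max_iff] at hni
  rw [mem_range] at hi
  rcases hni with (h | h) | h
  · simp [show 2 * i - r = 0 by omega]
  · simp [Nat.choose_eq_zero_of_lt (show n - d < r - i by omega)]
  · simp [Nat.choose_eq_zero_of_lt (show d < i by omega)]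

lemma B_le_B_succ {n d : ℕ} (r : ℕ) (hd : d + 1 ≤ n) : B n d r ≤ B n (d + 1) r := by
  rw [B_eq_weightedVandermonde_div r (by omega), B_eq_weightedVandermonde_div r hd,
    show n - d = n - (d + 1) + 1 by omega]
  gcongr
  exact weightedVandermonde_succ_right_le_succ_left _ _ _ _
    fun i j hij => by gcongr

lemma B_le_self {n d : ℕ} (r : ℕ) (hd : d ≤ n) : B n d r ≤ r := by
  rw [B_eq_weightedVandermonde_div r hd]
  refine div_le_of_le_mul₀ (by positivity) (by positivity) ?_
  have := weightedVandermonde_le (fun i => ((2 * i - r : ℕ) : ℝ)) d (n - d) r (c := r)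
    fun i hi => by exact_mod_cast (show 2 * i - r ≤ r by omega)
  rwa [Nat.add_sub_cancel' hd] at this

lemma sum_Icc_one_pred_reflect (n : ℕ) (f : ℕ → ℝ) :
    ∑ r ∈ Icc 1 (n - 1), f (n - r) = ∑ r ∈ Icc 1 (n - 1), f r :=
  sum_nbij' (n - ·) (n - ·) (by grind) (by grind) (by grind) (by grind) (by grind)

lemma FlipDist.sum_Icc_le_one {n : ℕ} (D : FlipDist n) : ∑ r ∈ Icc 1 (n - 1), D.p r ≤ 1 :=
  D.sum_eq ▸ sum_le_sum_of_subset_of_nonneg (fun r => by grind) fun r _ _ => D.nonneg r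

lemma htilde_le_htilde_succ {n : ℕ} (D : FlipDist n) {d : ℕ} (hd : d + 1 ≤ n) :
    htilde D d ≤ htilde D (d + 1) :=
  sum_le_sum fun r _ =>
    mul_le_mul_of_nonneg_left (B_le_B_succ r hd) (add_nonneg (D.nonneg r) (D.nonneg (n - r)))

lemma htilde_le {n : ℕ} (D : FlipDist n) {d : ℕ} (hd : d ≤ n) : htilde D d ≤ n := by
  have reflect : ∑ r ∈ Icc 1 (n - 1), D.p (n - r) * r
      = ∑ r ∈ Icc 1 (n - 1), D.p r * ((n : ℝ) - r) := by
    rw [← sum_Icc_one_pred_reflect n (fun s => D.p s * ((n : ℝ) - s))]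
    refine sum_congr rfl fun r hr => ?_
    rw [Nat.cast_sub (by grind)]
    ring
  calc htilde D d
      ≤ ∑ r ∈ Icc 1 (n - 1), (D.p r + D.p (n - r)) * r :=
        sum_le_sum fun r _ => mul_le_mul_of_nonneg_left (B_le_self r hd)
          (add_nonneg (D.nonneg r) (D.nonneg (n - r)))
    _ = n * ∑ r ∈ Icc 1 (n - 1), D.p r := by
        rw [sum_congr rfl fun r _ => add_mul _ _ _, sum_add_distrib, reflect,
          ← sum_add_distrib, mul_sum]
        exact sum_congr rfl fun r _ => by ring
    _ ≤ n * 1 := by gcongr; exact D.sum_Icc_le_one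
    _ = n := mul_one _

lemma hfun_le_hfun_succ {n : ℕ} (D : FlipDist n) {d : ℕ} (hd : d + 1 ≤ n) :
    hfun D d ≤ hfun D (d + 1) := by
  unfold hfun
  split_ifs with hd₀ hd₁ hd₁
  · exact htilde_le_htilde_succ D hd
  · exact htilde_le D (by omega)
  · omega
  · exact le_rfl

/-- There exists `n₀` such that for all `n ≥ n₀` and every flip
distribution `D`, the function `h` is monotonically increasing on `{0,…,n}`. -/
theorem stmt17 :
    ∃ n0 : ℕ, ∀ n : ℕ, n0 ≤ n → ∀ D : FlipDist n, ∀ d : ℕ, d ≤ n - 1 →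
      hfun D d ≤ hfun D (d + 1) :=
  ⟨1, fun _ hn D _ hd => hfun_le_hfun_succ D (by omega)⟩
end

section
/- Let n ≥ 2 be even. Let RLS be the (1+1)-EA_D with flip distribution D given by p_1 = 1 and p_i = 0 for i ≠ 1, and let A be the (1+1)-EA_{D'} with flip distribution D' given by p'_{n−1} = 1 and p'_i = 0 for i ≠ n−1. Define f : {0,1}^n → ℝ by f(x) = OM(x) if OM(x) is even and f(x) = n − OM(x) if OM(x) is odd. Let T^{RLS}(OM) be the runtime of RLS on OneMax (maximizing OM) and T^{A}(f) the runtime of A maximizing f. Then for every T ∈ ℕ, Pr[T^{RLS}(OM) = T] = Pr[T^{A}(f) = T]. -/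
open scoped BigOperators ENNReal Classical

/-- The function `f(x) = OM(x)` if `OM(x)` is even, `f(x) = n − OM(x)` if `OM(x)` is odd. -/
noncomputable def fSwap (n : ℕ) : Point n → ℝ :=
  fun x => if Even (OM x) then ((OM x : ℕ) : ℝ) else ((n - OM x : ℕ) : ℝ)

/-- `Pr[T = t]` expressed via the survival function `s t = Pr[T > t]`. -/
noncomputable def prRuntimeEq (s : ℕ → ℝ) (t : ℕ) : ℝ :=
  if t = 0 then 1 - s 0 else s (t - 1) - s t

set_option linter.unusedSectionVars false

def phi {n : ℕ} (x : Point n) : Point n :=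
  if Even (OM x) then x else fun i => !(x i)

lemma OM_compl {n : ℕ} (x : Point n) : OM (fun i => !(x i)) = n - OM x := by
  unfold OM
  have h : (Finset.univ.filter fun i => (!(x i)) = true)
      = Finset.univ \ (Finset.univ.filter fun i => x i = true) := by
    ext i; simp
  rw [h, Finset.card_sdiff_of_subset (Finset.filter_subset _ _), Finset.card_univ, Fintype.card_fin]

lemma hamming_compl_right {n : ℕ} (x y : Point n) :
    hamming x (fun i => !(y i)) = n - hamming x y := by
  unfold hamming
  have h : (Finset.univ.filter fun i => x i ≠ (!(y i)))
      = Finset.univ \ (Finset.univ.filter fun i => x i ≠ y i) := by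
    ext i; cases hx : x i <;> cases hy : y i <;> simp [hx, hy]
  rw [h, Finset.card_sdiff_of_subset (Finset.filter_subset _ _), Finset.card_univ, Fintype.card_fin]

lemma hamming_compl_left {n : ℕ} (x y : Point n) :
    hamming (fun i => !(x i)) y = n - hamming x y := by
  unfold hamming
  have h : (Finset.univ.filter fun i => (!(x i)) ≠ y i)
      = Finset.univ \ (Finset.univ.filter fun i => x i ≠ y i) := by
    ext i; cases hx : x i <;> cases hy : y i <;> simp [hx, hy]
  rw [h, Finset.card_sdiff_of_subset (Finset.filter_subset _ _), Finset.card_univ, Fintype.card_fin]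

lemma hamming_compl_compl {n : ℕ} (x y : Point n) :
    hamming (fun i => !(x i)) (fun i => !(y i)) = hamming x y := by
  unfold hamming
  congr 1
  ext i; cases hx : x i <;> cases hy : y i <;> simp [hx, hy]

lemma parity_lem {n : ℕ} (x y : Point n) : Even (OM x + OM y + hamming x y) := by
  unfold OM hamming
  rw [Finset.card_filter, Finset.card_filter, Finset.card_filter,
    ← Finset.sum_add_distrib, ← Finset.sum_add_distrib]
  apply Finset.even_sum
  intro i _
  cases hx : x i <;> cases hy : y i <;> simp [hx, hy]

lemma OM_phi {n : ℕ} (x : Point n) :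
    OM (phi x) = if Even (OM x) then OM x else n - OM x := by
  unfold phi; split_ifs with h
  · rfl
  · exact OM_compl x

lemma even_OM_phi {n : ℕ} (hev : Even n) (x : Point n) :
    (Even (OM (phi x)) ↔ Even (OM x)) := by
  rw [OM_phi]; split_ifs with h
  · simp [h]
  · constructor
    · intro h2
      exfalso
      have := Nat.Even.sub_odd (OM_le x) hev (Nat.not_even_iff_odd.mp h)
      exact (Nat.not_even_iff_odd.mpr this) h2
    · intro h2; exact absurd h2 h

lemma phi_invol {n : ℕ} (hev : Even n) : Function.Involutive (phi (n := n)) := by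
  intro x
  by_cases h : Even (OM x)
  · simp [phi, h]
  · have h2 : ¬ Even (OM (phi x)) := fun hh => h ((even_OM_phi hev x).mp hh)
    simp only [phi, if_neg h] at h2 ⊢
    rw [if_neg h2]
    funext i; simp

lemma phi_bij {n : ℕ} (hev : Even n) : Function.Bijective (phi (n := n)) :=
  (phi_invol hev).bijective

lemma hamming_phi {n : ℕ} (x y : Point n) :
    hamming (phi x) (phi y)
      = if (Even (OM x) ↔ Even (OM y)) then hamming x y else n - hamming x y := by
  unfold phi
  by_cases hx : Even (OM x) <;> by_cases hy : Even (OM y)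
  · rw [if_pos hx, if_pos hy, if_pos (by tauto)]
  · rw [if_pos hx, if_neg hy, if_neg (by tauto), hamming_compl_right]
  · rw [if_neg hx, if_pos hy, if_neg (by tauto), hamming_compl_left]
  · rw [if_neg hx, if_neg hy, if_pos (by tauto), hamming_compl_compl]

lemma hamming_parity {n : ℕ} (x y : Point n) :
    (Even (OM x) ↔ Even (OM y)) ↔ Even (hamming x y) := by
  have h := parity_lem x y
  rw [Nat.even_add, Nat.even_add] at h
  exact h

lemma fSwap_eq_phi {n : ℕ} (x : Point n) : fSwap n x = ((OM (phi x) : ℕ) : ℝ) := by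
  rw [OM_phi]; unfold fSwap; split_ifs <;> rfl

section Key
variable {n : ℕ} (hn : 2 ≤ n) (hev : Even n) (D D' : FlipDist n)
  (hD1 : D.p 1 = 1) (hD : ∀ k, k ≠ 1 → D.p k = 0)
  (hD'1 : D'.p (n - 1) = 1) (hD' : ∀ k, k ≠ n - 1 → D'.p k = 0)

include hn hev hD1 hD hD'1 hD'

lemma mutP_phi (x y : Point n) : mutP D' x y = mutP D (phi x) (phi y) := by
  unfold mutP
  rw [hamming_phi]
  by_cases hc : hamming x y = n - 1
  · have hodd : ¬ Even (hamming x y) := by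
      rw [hc]
      exact Nat.not_even_iff_odd.mpr (Nat.Even.sub_odd (by omega) hev odd_one)
    have hmix : ¬ (Even (OM x) ↔ Even (OM y)) := fun h => hodd ((hamming_parity x y).mp h)
    rw [if_neg hmix, hc, hD'1, Nat.sub_sub_self (by omega : 1 ≤ n), hD1,
      Nat.choose_symm (by omega : 1 ≤ n)]
  · rw [hD' _ hc]
    by_cases hpar : Even (OM x) ↔ Even (OM y)
    · have heven : Even (hamming x y) := (hamming_parity x y).mp hpar
      rw [if_pos hpar,
        hD _ (by intro h; rw [h] at heven; exact (Nat.not_even_iff_odd.mpr odd_one) heven)]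
    · rw [if_neg hpar]
      have h1 : hamming x y ≤ n := hamming_le x y
      rw [hD _ (by intro h; exact hc (by omega))]
      simp

lemma step_phi (x y : Point n) :
    eaStep D' (fSwap n) x y
      = eaStep D (fun z => ((OM z : ℕ) : ℝ)) (phi x) (phi y) := by
  unfold eaStep
  congr 1
  · rw [fSwap_eq_phi, fSwap_eq_phi, mutP_phi hn hev D D' hD1 hD hD'1 hD']
  · by_cases hxy : y = x
    · subst hxy
      rw [if_pos rfl, if_pos rfl, Finset.sum_filter, Finset.sum_filter]
      exact Fintype.sum_bijective _ (phi_bij hev) _ _ (fun z => by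
        rw [fSwap_eq_phi, fSwap_eq_phi, mutP_phi hn hev D D' hD1 hD hD'1 hD'])
    · rw [if_neg hxy, if_neg (fun h => hxy ((phi_invol hev).injective h))]

lemma dist_phi : ∀ (t : ℕ) (x : Point n),
    eaDist D' (fSwap n) (uniformInit n) t x
      = eaDist D (fun z => ((OM z : ℕ) : ℝ)) (uniformInit n) t (phi x) := by
  intro t
  induction t with
  | zero => intro x; rfl
  | succ t ih =>
    intro y
    simp only [eaDist]
    exact Fintype.sum_bijective _ (phi_bij hev) _ _ (fun x => by
      rw [ih x, step_phi hn hev D D' hD1 hD hD'1 hD' x y])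

lemma isOpt_phi (x : Point n) :
    isOpt (fSwap n) x ↔ isOpt (fun z => ((OM z : ℕ) : ℝ)) (phi x) := by
  constructor
  · intro h z
    have h2 := h (phi z)
    rw [fSwap_eq_phi, fSwap_eq_phi, (phi_invol hev) z] at h2
    exact h2
  · intro h y
    rw [fSwap_eq_phi, fSwap_eq_phi]
    exact h (phi y)

lemma survival_phi (t : ℕ) :
    survival D' (fSwap n) (uniformInit n) t
      = survival D (fun z => ((OM z : ℕ) : ℝ)) (uniformInit n) t := by
  unfold survival
  rw [Finset.sum_filter, Finset.sum_filter]
  exact Fintype.sum_bijective _ (phi_bij hev) _ _ (fun x =>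
    if_congr (not_congr (isOpt_phi hn hev D D' hD1 hD hD'1 hD' x))
      (dist_phi hn hev D D' hD1 hD hD'1 hD' t x) rfl)

end Key

/-- Let `n ≥ 2` be even, let RLS be the (1+1)-EA with `p₁ = 1`, and let
`A` be the (1+1)-EA with `p_{n−1} = 1`.  With `f` as above, the runtime of RLS on OneMax
and the runtime of `A` on `f` follow the same distribution:
`Pr[T^{RLS}(OM) = T] = Pr[T^{A}(f) = T]` for every `T ∈ ℕ`. -/
theorem stmt18 (n : ℕ) (hn : 2 ≤ n) (hev : Even n)
    (D D' : FlipDist n)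
    (hD1 : D.p 1 = 1) (hD : ∀ k, k ≠ 1 → D.p k = 0)
    (hD'1 : D'.p (n - 1) = 1) (hD' : ∀ k, k ≠ n - 1 → D'.p k = 0) :
    ∀ T : ℕ,
      prRuntimeEq (survival D (fun x => (OM x : ℝ)) (uniformInit n)) T
        = prRuntimeEq (survival D' (fSwap n) (uniformInit n)) T := by
  intro T
  simp only [prRuntimeEq, survival_phi hn hev D D' hD1 hD hD'1 hD']
end
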